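/- arXiv:math/0512389 — 2 statements merged into one kernel-verified Lean document; each statement's English description precedes it below -/
import Mathlib

section
/- Let n, k be integers with 0 ≤ 2k ≤ n. Then the subspace A⁰_{n,k} of A_{n,k} is invariant under the action of the symmetric group S_n, and A⁰_{n,k} is a simple module over the group algebra ℂ[S_n] (i.e. the representation of S_n on A⁰_{n,k} is irreducible). -/
open MvPolynomial Finset

noncomputable section

/-- The "square-free monomial" `x_I = ∏_{i ∈ I} x_i`. -/
def xI (n : ℕ) (I : Finset (Fin n)) : MvPolynomial (Fin n) ℂ := ∏ i ∈ I, X i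

/-- `A_{n,k}`: the span of the square-free monomials of degree `k`. -/
def Aspace (n k : ℕ) : Submodule ℂ (MvPolynomial (Fin n) ℂ) :=
  Submodule.span ℂ {f | ∃ I : Finset (Fin n), I.card = k ∧ f = xI n I}

/-- The coefficient `c_I` of the monomial `x_I` in `f`. -/
def coeffI {n : ℕ} (f : MvPolynomial (Fin n) ℂ) (I : Finset (Fin n)) : ℂ :=
  MvPolynomial.coeff (∑ i ∈ I, Finsupp.single i 1) f

/-- `A⁰_{n,k}`: elements `∑ c_I x_I` of `A_{n,k}` with `∑_{j ∉ J} c_{J ∪ {j}} = 0`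
for every `(k-1)`-element subset `J`. -/
def A0space (n k : ℕ) : Submodule ℂ (MvPolynomial (Fin n) ℂ) where
  carrier := {f | f ∈ Aspace n k ∧ ∀ J : Finset (Fin n), J.card = k - 1 →
    ∑ j ∈ Jᶜ, coeffI f (insert j J) = 0}
  add_mem' := by
    rintro f g ⟨hf1, hf2⟩ ⟨hg1, hg2⟩
    refine ⟨Submodule.add_mem _ hf1 hg1, fun J hJ => ?_⟩
    have h1 := hf2 J hJ
    have h2 := hg2 J hJ
    simp only [coeffI] at h1 h2 ⊢
    simp only [coeff_add]
    rw [Finset.sum_add_distrib, h1, h2, add_zero]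
  zero_mem' := by
    refine ⟨Submodule.zero_mem _, fun J hJ => ?_⟩
    simp [coeffI]
  smul_mem' := by
    rintro c f ⟨hf1, hf2⟩
    refine ⟨Submodule.smul_mem _ c hf1, fun J hJ => ?_⟩
    have h1 := hf2 J hJ
    simp only [coeffI] at h1 ⊢
    simp only [coeff_smul, smul_eq_mul]
    rw [← Finset.mul_sum, h1, mul_zero]

/-- `ψ_n^l`, the linear map sending the square-free monomial `x_I` to
`x_I · ∑_S x_S`, the sum over all `l`-element subsets `S` of `{1,…,n} \ I`. -/
def psi (n l : ℕ) : MvPolynomial (Fin n) ℂ →ₗ[ℂ] MvPolynomial (Fin n) ℂ :=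
  ∑ S ∈ Finset.univ.filter (fun S : Finset (Fin n) => S.card = l),
    (LinearMap.mulRight ℂ (xI n S)).comp
      (aeval (fun i : Fin n => if i ∈ S then 0 else X i) :
        MvPolynomial (Fin n) ℂ →ₐ[ℂ] MvPolynomial (Fin n) ℂ).toLinearMap

/-- `H^k_{n,m} = ψ_n^{m-k}(A⁰_{n,k})`. -/
def Hspace (n m k : ℕ) : Submodule ℂ (MvPolynomial (Fin n) ℂ) :=
  (A0space n k).map (psi n (m - k))

/-- The squared norm of a form: the monomials `x_I` are an orthonormal basis. -/
def sqNorm {n : ℕ} (f : MvPolynomial (Fin n) ℂ) : ℝ :=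
  ∑ d ∈ f.support, Complex.normSq (f.coeff d)

/-- The inner product of two forms: the monomials `x_I` are an orthonormal basis. -/
def pInner {n : ℕ} (f g : MvPolynomial (Fin n) ℂ) : ℂ :=
  ∑ d ∈ f.support, f.coeff d * (starRingEnd ℂ) (g.coeff d)

namespace A0aux

variable {n : ℕ}

/-- exponent vector of the squarefree monomial on `I` -/
def ind (I : Finset (Fin n)) : Fin n →₀ ℕ := ∑ i ∈ I, Finsupp.single i 1

lemma ind_apply (I : Finset (Fin n)) (j : Fin n) : ind I j = if j ∈ I then 1 else 0 := by
  classical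
  simp only [ind, Finsupp.finset_sum_apply, Finsupp.single_apply]
  rw [Finset.sum_ite_eq' I j (fun _ => 1)]

lemma ind_inj {I J : Finset (Fin n)} (h : ind I = ind J) : I = J := by
  ext j
  have := congrArg (fun f => f j) h
  simp only [ind_apply] at this
  by_cases hI : j ∈ I <;> by_cases hJ : j ∈ J <;> simp_all

lemma xI_eq_monomial (I : Finset (Fin n)) : xI n I = monomial (ind I) 1 := by
  classical
  induction I using Finset.induction with
  | empty => simp [xI, ind, monomial_zero']
  | @insert a I ha ih =>
    rw [xI, Finset.prod_insert ha, ← xI, ih]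
    rw [show ind (insert a I) = Finsupp.single a 1 + ind I from Finset.sum_insert ha,
      X, monomial_mul, one_mul]

lemma coeffI_xI (I J : Finset (Fin n)) : coeffI (xI n J) I = if I = J then 1 else 0 := by
  rw [coeffI, xI_eq_monomial]
  show MvPolynomial.coeff (ind I) (monomial (ind J) 1) = _
  rw [coeff_monomial]
  by_cases h : I = J
  · simp [h]
  · have : ¬ ind J = ind I := fun hh => h (ind_inj hh.symm)
    simp [h, this]

/-- coefficient-space polynomial builder -/
def toPoly (c : Finset (Fin n) → ℂ) : MvPolynomial (Fin n) ℂ :=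
  ∑ I : Finset (Fin n), c I • xI n I

lemma coeffI_toPoly (c : Finset (Fin n) → ℂ) (I : Finset (Fin n)) :
    coeffI (toPoly c) I = c I := by
  classical
  rw [toPoly, coeffI]
  simp only [coeff_sum, coeff_smul]
  have : ∀ J : Finset (Fin n), c J • MvPolynomial.coeff (∑ i ∈ I, Finsupp.single i 1) (xI n J)
      = c J • (if I = J then (1:ℂ) else 0) := by
    intro J; rw [← coeffI, coeffI_xI]
  rw [Finset.sum_congr rfl (fun J _ => this J)]
  simp [Finset.sum_ite_eq]




def delta0 : Finset (Fin n) → ℂ := fun I => if I = ∅ then 1 else 0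

def mab (a b : Fin n) (c : Finset (Fin n) → ℂ) : Finset (Fin n) → ℂ :=
  fun I => (if a ∈ I then c (I.erase a) else 0) - (if b ∈ I then c (I.erase b) else 0)

def ptc : List (Fin n × Fin n) → Finset (Fin n) → ℂ
  | [] => delta0
  | p :: L => mab p.1 p.2 (ptc L)

def lets (L : List (Fin n × Fin n)) : List (Fin n) := L.flatMap fun p => [p.1, p.2]

lemma lets_cons (p : Fin n × Fin n) (L : List (Fin n × Fin n)) :
    lets (p :: L) = p.1 :: p.2 :: lets L := rfl

def sq (Ω : Finset (Fin n)) (k : ℕ) (c : Finset (Fin n) → ℂ) : Prop :=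
  ∀ I, ¬(I ⊆ Ω ∧ I.card = k) → c I = 0

def harm (Ω : Finset (Fin n)) (k : ℕ) (c : Finset (Fin n) → ℂ) : Prop :=
  ∀ J, J ⊆ Ω → J.card = k - 1 → ∑ j ∈ Ω \ J, c (insert j J) = 0

lemma mem_sdiff_pair {Ω : Finset (Fin n)} {a b x : Fin n} :
    x ∈ Ω \ {a, b} ↔ x ∈ Ω ∧ x ≠ a ∧ x ≠ b := by
  simp [Finset.mem_sdiff, not_or]

lemma sq_mab {Ω : Finset (Fin n)} {k : ℕ} {a b : Fin n} {c : Finset (Fin n) → ℂ}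
    (hab : a ≠ b) (ha : a ∈ Ω) (hb : b ∈ Ω) (hc : sq (Ω \ {a, b}) k c) :
    sq Ω (k + 1) (mab a b c) := by
  have h1 : ∀ J, a ∈ J → c J = 0 := fun J hJ => hc J (by
    rintro ⟨hs, -⟩
    exact absurd (hs hJ) (by simp))
  have h2 : ∀ J, b ∈ J → c J = 0 := fun J hJ => hc J (by
    rintro ⟨hs, -⟩
    exact absurd (hs hJ) (by simp))
  intro I hI
  unfold mab
  by_cases haI : a ∈ I <;> by_cases hbI : b ∈ I
  · rw [if_pos haI, if_pos hbI,
      h2 _ (Finset.mem_erase.2 ⟨Ne.symm hab, hbI⟩),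
      h1 _ (Finset.mem_erase.2 ⟨hab, haI⟩), sub_zero]
  · rw [if_pos haI, if_neg hbI, sub_zero]
    apply hc
    rintro ⟨hs, hcard⟩
    refine hI ⟨?_, ?_⟩
    · intro x hx
      by_cases hxa : x = a
      · exact hxa ▸ ha
      · exact (Finset.mem_sdiff.1 (hs (Finset.mem_erase.2 ⟨hxa, hx⟩))).1
    · rw [← Finset.card_erase_add_one haI, hcard]
  · rw [if_neg haI, if_pos hbI, zero_sub, neg_eq_zero]
    apply hc
    rintro ⟨hs, hcard⟩
    refine hI ⟨?_, ?_⟩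
    · intro x hx
      by_cases hxb : x = b
      · exact hxb ▸ hb
      · exact (Finset.mem_sdiff.1 (hs (Finset.mem_erase.2 ⟨hxb, hx⟩))).1
    · rw [← Finset.card_erase_add_one hbI, hcard]
  · rw [if_neg haI, if_neg hbI, sub_zero]

lemma harm_mab {Ω : Finset (Fin n)} {k : ℕ} {a b : Fin n} {c : Finset (Fin n) → ℂ}
    (hab : a ≠ b) (ha : a ∈ Ω) (hb : b ∈ Ω)
    (hsq : sq (Ω \ {a, b}) k c) (hh : harm (Ω \ {a, b}) k c) :
    harm Ω (k + 1) (mab a b c) := by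
  have h1 : ∀ J, a ∈ J → c J = 0 := fun J hJ => hsq J (by
    rintro ⟨hs, -⟩; exact absurd (hs hJ) (by simp))
  have h2 : ∀ J, b ∈ J → c J = 0 := fun J hJ => hsq J (by
    rintro ⟨hs, -⟩; exact absurd (hs hJ) (by simp))
  intro J hJ hcard
  rw [Nat.add_sub_cancel] at hcard
  by_cases haJ : a ∈ J <;> by_cases hbJ : b ∈ J
  · -- both in J : every summand vanishes
    apply Finset.sum_eq_zero
    intro j hj
    have hjJ : j ∉ J := (Finset.mem_sdiff.1 hj).2
    unfold mab
    rw [if_pos (Finset.mem_insert_of_mem haJ), if_pos (Finset.mem_insert_of_mem hbJ)]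
    rw [h2 _ (Finset.mem_erase.2 ⟨Ne.symm hab, Finset.mem_insert_of_mem hbJ⟩),
      h1 _ (Finset.mem_erase.2 ⟨hab, Finset.mem_insert_of_mem haJ⟩), sub_zero]
  · -- a ∈ J, b ∉ J
    have hbmem : b ∈ Ω \ J := Finset.mem_sdiff.2 ⟨hb, hbJ⟩
    rw [← Finset.sum_erase_add _ _ hbmem]
    have hterm_b : mab a b c (insert b J) = 0 := by
      unfold mab
      rw [if_pos (Finset.mem_insert_of_mem haJ), if_pos (Finset.mem_insert_self b J)]
      rw [h2 _ (Finset.mem_erase.2 ⟨Ne.symm hab, Finset.mem_insert_self b J⟩),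
        Finset.erase_insert hbJ, h1 _ haJ, sub_zero]
    rw [hterm_b, add_zero]
    have hterms : ∀ j ∈ (Ω \ J).erase b, mab a b c (insert j J) = c (insert j (J.erase a)) := by
      intro j hj
      have hjb : j ≠ b := (Finset.mem_erase.1 hj).1
      have hjJ : j ∉ J := (Finset.mem_sdiff.1 (Finset.mem_erase.1 hj).2).2
      have hja : j ≠ a := fun h => hjJ (h ▸ haJ)
      unfold mab
      rw [if_pos (Finset.mem_insert_of_mem haJ),
        if_neg (by simp [hjb.symm, hbJ] : ¬ b ∈ insert j J), sub_zero]
      congr 1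
      rw [Finset.erase_insert_of_ne hja]
    rw [Finset.sum_congr rfl hterms]
    have hdom : (Ω \ J).erase b = (Ω \ {a, b}) \ J.erase a := by
      ext x
      simp only [Finset.mem_erase, Finset.mem_sdiff, mem_sdiff_pair, Finset.mem_insert,
        Finset.mem_singleton, not_or]
      constructor
      · rintro ⟨hxb, hxΩ, hxJ⟩
        exact ⟨⟨hxΩ, fun h => hxJ (h ▸ haJ), hxb⟩, fun h => hxJ h.2⟩
      · rintro ⟨⟨hxΩ, hxa, hxb⟩, hxJ⟩
        exact ⟨hxb, hxΩ, fun h => hxJ ⟨hxa, h⟩⟩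
    rw [hdom]
    apply hh
    · intro x hx
      have h' := Finset.mem_of_mem_erase hx
      exact mem_sdiff_pair.2 ⟨hJ h', (Finset.mem_erase.1 hx).1, fun h => hbJ (h ▸ h')⟩
    · rw [Finset.card_erase_of_mem haJ, hcard]
  · -- b ∈ J, a ∉ J
    have hamem : a ∈ Ω \ J := Finset.mem_sdiff.2 ⟨ha, haJ⟩
    rw [← Finset.sum_erase_add _ _ hamem]
    have hterm_a : mab a b c (insert a J) = 0 := by
      unfold mab
      rw [if_pos (Finset.mem_insert_self a J), if_pos (Finset.mem_insert_of_mem hbJ)]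
      rw [Finset.erase_insert haJ, h2 _ hbJ,
        h1 _ (Finset.mem_erase.2 ⟨hab, Finset.mem_insert_self a J⟩), sub_zero]
    rw [hterm_a, add_zero]
    have hterms : ∀ j ∈ (Ω \ J).erase a, mab a b c (insert j J) = - c (insert j (J.erase b)) := by
      intro j hj
      have hja : j ≠ a := (Finset.mem_erase.1 hj).1
      have hjJ : j ∉ J := (Finset.mem_sdiff.1 (Finset.mem_erase.1 hj).2).2
      have hjb : j ≠ b := fun h => hjJ (h ▸ hbJ)
      unfold mab
      rw [if_neg (by simp [hja.symm, haJ] : ¬ a ∈ insert j J),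
        if_pos (Finset.mem_insert_of_mem hbJ), zero_sub]
      congr 2
      rw [Finset.erase_insert_of_ne hjb]
    rw [Finset.sum_congr rfl hterms, Finset.sum_neg_distrib, neg_eq_zero]
    have hdom : (Ω \ J).erase a = (Ω \ {a, b}) \ J.erase b := by
      ext x
      simp only [Finset.mem_erase, Finset.mem_sdiff, mem_sdiff_pair, Finset.mem_insert,
        Finset.mem_singleton, not_or]
      constructor
      · rintro ⟨hxa, hxΩ, hxJ⟩
        exact ⟨⟨hxΩ, hxa, fun h => hxJ (h ▸ hbJ)⟩, fun h => hxJ h.2⟩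
      · rintro ⟨⟨hxΩ, hxa, hxb⟩, hxJ⟩
        exact ⟨hxa, hxΩ, fun h => hxJ ⟨hxb, h⟩⟩
    rw [hdom]
    apply hh
    · intro x hx
      have h' := Finset.mem_of_mem_erase hx
      exact mem_sdiff_pair.2 ⟨hJ h', fun h => haJ (h ▸ h'), (Finset.mem_erase.1 hx).1⟩
    · rw [Finset.card_erase_of_mem hbJ, hcard]
  · -- neither in J
    have hamem : a ∈ Ω \ J := Finset.mem_sdiff.2 ⟨ha, haJ⟩
    rw [← Finset.sum_erase_add _ _ hamem]
    have hbmem : b ∈ (Ω \ J).erase a := Finset.mem_erase.2 ⟨Ne.symm hab, Finset.mem_sdiff.2 ⟨hb, hbJ⟩⟩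
    rw [← Finset.sum_erase_add _ _ hbmem]
    have hz : ∀ j ∈ ((Ω \ J).erase a).erase b, mab a b c (insert j J) = 0 := by
      intro j hj
      have hjb : j ≠ b := (Finset.mem_erase.1 hj).1
      have hja : j ≠ a := (Finset.mem_erase.1 (Finset.mem_of_mem_erase hj)).1
      unfold mab
      rw [if_neg (by simp [hja.symm, haJ] : ¬ a ∈ insert j J),
        if_neg (by simp [hjb.symm, hbJ] : ¬ b ∈ insert j J), sub_zero]
    rw [Finset.sum_eq_zero hz, zero_add]
    have hta : mab a b c (insert a J) = c J := by
      unfold mab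
      rw [if_pos (Finset.mem_insert_self a J), if_neg (by simp [Ne.symm hab, hbJ]),
        Finset.erase_insert haJ, sub_zero]
    have htb : mab a b c (insert b J) = - c J := by
      unfold mab
      rw [if_neg (by simp [hab, haJ]), if_pos (Finset.mem_insert_self b J),
        Finset.erase_insert hbJ, zero_sub]
    rw [hta, htb]
    ring

lemma nodup_cons_facts {p : Fin n × Fin n} {L : List (Fin n × Fin n)}
    (h : (lets (p :: L)).Nodup) :
    p.1 ≠ p.2 ∧ p.1 ∉ lets L ∧ p.2 ∉ lets L ∧ (lets L).Nodup := by
  rw [lets_cons] at h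
  rcases List.nodup_cons.1 h with ⟨h1, h2⟩
  rcases List.nodup_cons.1 h2 with ⟨h3, h4⟩
  exact ⟨fun he => h1 (he ▸ List.mem_cons_self), fun he => h1 (List.mem_cons_of_mem _ he),
    h3, h4⟩

lemma ptc_prop : ∀ (L : List (Fin n × Fin n)) (Ω : Finset (Fin n)), (lets L).Nodup →
    (∀ x ∈ lets L, x ∈ Ω) → sq Ω L.length (ptc L) ∧ harm Ω L.length (ptc L)
  | [], Ω, _, _ => by
    constructor
    · intro I hI
      show delta0 I = 0
      unfold delta0
      rw [if_neg]
      rintro rfl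
      exact hI ⟨Finset.empty_subset _, Finset.card_empty⟩
    · intro J hJ hcard
      apply Finset.sum_eq_zero
      intro j hj
      show delta0 (insert j J) = 0
      unfold delta0
      rw [if_neg (Finset.insert_ne_empty _ _)]
  | p :: L, Ω, hnd, hmem => by
    obtain ⟨hab, haL, hbL, hndL⟩ := nodup_cons_facts hnd
    have ha : p.1 ∈ Ω := hmem _ (by rw [lets_cons]; exact List.mem_cons_self)
    have hb : p.2 ∈ Ω := hmem _ (by rw [lets_cons]; exact List.mem_cons_of_mem _ (List.mem_cons_self))
    have hmem' : ∀ x ∈ lets L, x ∈ Ω \ {p.1, p.2} := by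
      intro x hx
      refine mem_sdiff_pair.2 ⟨hmem _ (by rw [lets_cons]; exact List.mem_cons_of_mem _ (List.mem_cons_of_mem _ hx)), ?_, ?_⟩
      · rintro rfl; exact haL hx
      · rintro rfl; exact hbL hx
    obtain ⟨hsq, hh⟩ := ptc_prop L (Ω \ {p.1, p.2}) hndL hmem'
    exact ⟨sq_mab hab ha hb hsq, harm_mab hab ha hb hsq hh⟩

lemma sq_ptc {L : List (Fin n × Fin n)} {Ω : Finset (Fin n)} (hnd : (lets L).Nodup)
    (hmem : ∀ x ∈ lets L, x ∈ Ω) : sq Ω L.length (ptc L) := (ptc_prop L Ω hnd hmem).1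

lemma harm_ptc {L : List (Fin n × Fin n)} {Ω : Finset (Fin n)} (hnd : (lets L).Nodup)
    (hmem : ∀ x ∈ lets L, x ∈ Ω) : harm Ω L.length (ptc L) := (ptc_prop L Ω hnd hmem).2

/-- support of `ptc L` consists of subsets of the letters of L -/
lemma ptc_eq_zero_of_not_subset {L : List (Fin n × Fin n)} (hnd : (lets L).Nodup)
    {I : Finset (Fin n)} {x : Fin n} (hx : x ∈ I) (hxL : x ∉ lets L) : ptc L I = 0 := by
  apply sq_ptc hnd (Ω := (lets L).toFinset) (by intro y hy; exact List.mem_toFinset.2 hy)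
  rintro ⟨hs, -⟩
  exact hxL (List.mem_toFinset.1 (hs hx))

lemma ptc_card {L : List (Fin n × Fin n)} (hnd : (lets L).Nodup)
    {I : Finset (Fin n)} (h : I.card ≠ L.length) : ptc L I = 0 := by
  apply sq_ptc hnd (Ω := Finset.univ) (fun y _ => Finset.mem_univ y)
  rintro ⟨-, hc⟩
  exact h hc

def gens (Ω : Finset (Fin n)) (k : ℕ) : Set (Finset (Fin n) → ℂ) :=
  {c | ∃ L : List (Fin n × Fin n), L.length = k ∧ (lets L).Nodup ∧
    (∀ x ∈ lets L, x ∈ Ω) ∧ c = ptc L}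

def PTspan (Ω : Finset (Fin n)) (k : ℕ) : Submodule ℂ (Finset (Fin n) → ℂ) :=
  Submodule.span ℂ (gens Ω k)

lemma PTspan_mono {Ω Ω' : Finset (Fin n)} (h : Ω ⊆ Ω') (k : ℕ) :
    PTspan Ω k ≤ PTspan Ω' k := by
  apply Submodule.span_le.2
  rintro c ⟨L, h1, h2, h3, h4⟩
  exact Submodule.subset_span ⟨L, h1, h2, fun x hx => h (h3 x hx), h4⟩

/-- the submodule of `sq ∧ harm` functions -/
def A0c (Ω : Finset (Fin n)) (k : ℕ) : Submodule ℂ (Finset (Fin n) → ℂ) where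
  carrier := {c | sq Ω k c ∧ harm Ω k c}
  add_mem' := by
    rintro c d ⟨hc1, hc2⟩ ⟨hd1, hd2⟩
    refine ⟨fun I hI => ?_, fun J hJ hcard => ?_⟩
    · show c I + d I = 0
      rw [hc1 I hI, hd1 I hI, add_zero]
    · show ∑ j ∈ Ω \ J, (c (insert j J) + d (insert j J)) = 0
      rw [Finset.sum_add_distrib, hc2 J hJ hcard, hd2 J hJ hcard, add_zero]
  zero_mem' := by
    refine ⟨fun I _ => rfl, fun J _ _ => ?_⟩
    simp
  smul_mem' := by
    rintro μ c ⟨hc1, hc2⟩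
    refine ⟨fun I hI => ?_, fun J hJ hcard => ?_⟩
    · show μ * c I = 0
      rw [hc1 I hI, mul_zero]
    · show ∑ j ∈ Ω \ J, μ * c (insert j J) = 0
      rw [← Finset.mul_sum, hc2 J hJ hcard, mul_zero]

lemma PTspan_le_A0c (Ω : Finset (Fin n)) (k : ℕ) : PTspan Ω k ≤ A0c Ω k := by
  apply Submodule.span_le.2
  rintro c ⟨L, h1, h2, h3, h4⟩
  subst h4
  exact h1 ▸ ⟨sq_ptc h2 h3, harm_ptc h2 h3⟩

def fstSet (L : List (Fin n × Fin n)) : Finset (Fin n) := (L.map Prod.fst).toFinset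

lemma ptc_fstSet : ∀ {L : List (Fin n × Fin n)}, (lets L).Nodup → ptc L (fstSet L) = 1
  | [], _ => by simp [ptc, fstSet, delta0]
  | p :: L, hnd => by
    obtain ⟨hab, haL, hbL, hndL⟩ := nodup_cons_facts hnd
    have hfst : ∀ x ∈ fstSet L, x ∈ lets L := by
      intro x hx
      rw [fstSet, List.mem_toFinset, List.mem_map] at hx
      obtain ⟨q, hq, rfl⟩ := hx
      exact List.mem_flatMap.2 ⟨q, hq, by simp⟩
    have haf : p.1 ∉ fstSet L := fun h => haL (hfst _ h)
    have hbf : p.2 ∉ fstSet L := fun h => hbL (hfst _ h)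
    have hfscons : fstSet (p :: L) = insert p.1 (fstSet L) := by
      simp [fstSet]
    rw [hfscons]
    show mab p.1 p.2 (ptc L) (insert p.1 (fstSet L)) = 1
    unfold mab
    rw [if_pos (Finset.mem_insert_self _ _), if_neg (by simp [Ne.symm hab, hbf]),
      Finset.erase_insert haf, sub_zero, ptc_fstSet hndL]

def ip (c d : Finset (Fin n) → ℂ) : ℂ := ∑ I : Finset (Fin n), c I * (starRingEnd ℂ) (d I)

def Dm (Ω : Finset (Fin n)) (c : Finset (Fin n) → ℂ) : Finset (Fin n) → ℂ :=
  fun J => if J ⊆ Ω then ∑ j ∈ Ω \ J, c (insert j J) else 0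

def Um (Ω : Finset (Fin n)) (c : Finset (Fin n) → ℂ) : Finset (Fin n) → ℂ :=
  fun K => if K ⊆ Ω then ∑ i ∈ K, c (K.erase i) else 0

lemma Um_zero (Ω : Finset (Fin n)) : Um Ω (0 : Finset (Fin n) → ℂ) = 0 := by
  funext K
  unfold Um
  simp

lemma ip_adj (Ω : Finset (Fin n)) (c d : Finset (Fin n) → ℂ) :
    ip (Um Ω c) d = ip c (Dm Ω d) := by
  have hL : ip (Um Ω c) d = ∑ x ∈ (Finset.univ.filter
      (fun K : Finset (Fin n) => K ⊆ Ω)).sigma (fun K => K),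
      c (x.1.erase x.2) * (starRingEnd ℂ) (d x.1) := by
    rw [Finset.sum_sigma, Finset.sum_filter]
    unfold ip Um
    apply Finset.sum_congr rfl
    intro K _
    split_ifs with h
    · rw [Finset.sum_mul]
    · rw [zero_mul]
  have hR : ip c (Dm Ω d) = ∑ x ∈ (Finset.univ.filter
      (fun J : Finset (Fin n) => J ⊆ Ω)).sigma (fun J => Ω \ J),
      c x.1 * (starRingEnd ℂ) (d (insert x.2 x.1)) := by
    rw [Finset.sum_sigma, Finset.sum_filter]
    unfold ip Dm
    apply Finset.sum_congr rfl
    intro J _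
    split_ifs with h
    · rw [map_sum, Finset.mul_sum]
    · rw [map_zero, mul_zero]
  rw [hL, hR]
  apply Finset.sum_nbij' (i := fun x => ⟨x.1.erase x.2, x.2⟩) (j := fun x => ⟨insert x.2 x.1, x.2⟩)
  · rintro ⟨K, i⟩ hx
    rw [Finset.mem_sigma, Finset.mem_filter] at hx ⊢
    refine ⟨⟨Finset.mem_univ _, (Finset.erase_subset _ _).trans hx.1.2⟩, ?_⟩
    exact Finset.mem_sdiff.2 ⟨hx.1.2 hx.2, Finset.notMem_erase _ _⟩
  · rintro ⟨J, j⟩ hx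
    rw [Finset.mem_sigma, Finset.mem_filter] at hx ⊢
    have hj := Finset.mem_sdiff.1 hx.2
    exact ⟨⟨Finset.mem_univ _, Finset.insert_subset hj.1 hx.1.2⟩, Finset.mem_insert_self _ _⟩
  · rintro ⟨K, i⟩ hx
    rw [Finset.mem_sigma, Finset.mem_filter] at hx
    exact Sigma.ext (Finset.insert_erase hx.2) (heq_of_eq rfl)
  · rintro ⟨J, j⟩ hx
    rw [Finset.mem_sigma, Finset.mem_filter] at hx
    have hj := Finset.mem_sdiff.1 hx.2
    exact Sigma.ext (Finset.erase_insert hj.2) (heq_of_eq rfl)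
  · rintro ⟨K, i⟩ hx
    rw [Finset.mem_sigma, Finset.mem_filter] at hx
    simp only
    rw [Finset.insert_erase hx.2]

lemma ip_self (c : Finset (Fin n) → ℂ) :
    ip c c = ((∑ I : Finset (Fin n), Complex.normSq (c I) : ℝ) : ℂ) := by
  unfold ip
  rw [Complex.ofReal_sum]
  exact Finset.sum_congr rfl fun I _ => (Complex.mul_conj (c I))

lemma ip_self_nonneg_zero {c : Finset (Fin n) → ℂ}
    (h : (∑ I : Finset (Fin n), Complex.normSq (c I) : ℝ) = 0) : c = 0 := by
  funext I
  have := (Finset.sum_eq_zero_iff_of_nonneg (fun I _ => Complex.normSq_nonneg (c I))).1 h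
    I (Finset.mem_univ I)
  exact Complex.normSq_eq_zero.1 this

lemma DU_UD {Ω : Finset (Fin n)} (c : Finset (Fin n) → ℂ) {I : Finset (Fin n)}
    (hI : I ⊆ Ω) :
    Dm Ω (Um Ω c) I - Um Ω (Dm Ω c) I
      = (((Ω.card : ℝ) - 2 * I.card : ℝ) : ℂ) * c I := by
  have hDU : Dm Ω (Um Ω c) I
      = ((Ω.card - I.card : ℕ) : ℂ) * c I
        + ∑ j ∈ Ω \ I, ∑ i ∈ I, c (insert j (I.erase i)) := by
    unfold Dm
    rw [if_pos hI]
    have step : ∀ j ∈ Ω \ I, Um Ω c (insert j I)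
        = c I + ∑ i ∈ I, c (insert j (I.erase i)) := by
      intro j hj
      have hj' := Finset.mem_sdiff.1 hj
      unfold Um
      rw [if_pos (Finset.insert_subset hj'.1 hI), Finset.sum_insert hj'.2,
        Finset.erase_insert hj'.2]
      congr 1
      apply Finset.sum_congr rfl
      intro i hi
      have hji : j ≠ i := fun h => hj'.2 (h ▸ hi)
      rw [Finset.erase_insert_of_ne hji]
    rw [Finset.sum_congr rfl step, Finset.sum_add_distrib, Finset.sum_const,
      Finset.card_sdiff_of_subset hI, nsmul_eq_mul]
  have hUD : Um Ω (Dm Ω c) I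
      = ((I.card : ℕ) : ℂ) * c I + ∑ j ∈ Ω \ I, ∑ i ∈ I, c (insert j (I.erase i)) := by
    unfold Um
    rw [if_pos hI]
    have step : ∀ i ∈ I, Dm Ω c (I.erase i)
        = c I + ∑ j ∈ Ω \ I, c (insert j (I.erase i)) := by
      intro i hi
      unfold Dm
      rw [if_pos ((Finset.erase_subset _ _).trans hI)]
      have hdom : Ω \ I.erase i = insert i (Ω \ I) := by
        ext x
        simp only [Finset.mem_sdiff, Finset.mem_erase, Finset.mem_insert, not_and]
        constructor
        · rintro ⟨hxΩ, hx⟩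
          by_cases hxi : x = i
          · exact Or.inl hxi
          · exact Or.inr ⟨hxΩ, hx hxi⟩
        · rintro (rfl | ⟨hxΩ, hxI⟩)
          · exact ⟨hI hi, fun h => absurd rfl h⟩
          · exact ⟨hxΩ, fun _ h => hxI h⟩
      rw [hdom, Finset.sum_insert (by simp [hi]), Finset.insert_erase hi]
    rw [Finset.sum_congr rfl step, Finset.sum_add_distrib, Finset.sum_const, nsmul_eq_mul,
      Finset.sum_comm]
  rw [hDU, hUD]
  have hle : I.card ≤ Ω.card := Finset.card_le_card hI
  push_cast [Nat.cast_sub hle]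
  ring

lemma Dm_eq_zero {Ω : Finset (Fin n)} {k : ℕ} {c : Finset (Fin n) → ℂ}
    (hsq : sq Ω k c) (hh : harm Ω k c) : Dm Ω c = 0 := by
  funext J
  show Dm Ω c J = 0
  unfold Dm
  by_cases hJΩ : J ⊆ Ω
  · rw [if_pos hJΩ]
    by_cases hcard : J.card = k - 1
    · exact hh J hJΩ hcard
    · apply Finset.sum_eq_zero
      intro j hj
      have hj' := Finset.mem_sdiff.1 hj
      apply hsq
      rintro ⟨-, hc⟩
      rw [Finset.card_insert_of_notMem hj'.2] at hc
      omega
  · rw [if_neg hJΩ]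

lemma eq_zero_of_card_lt {Ω : Finset (Fin n)} {k : ℕ} {c : Finset (Fin n) → ℂ}
    (h2 : Ω.card < 2 * k) (hsq : sq Ω k c) (hh : harm Ω k c) : c = 0 := by
  have hD : Dm Ω c = 0 := Dm_eq_zero hsq hh
  have key : ip (Um Ω c) (Um Ω c)
      = (((Ω.card : ℝ) - 2 * k : ℝ) : ℂ) * ip c c := by
    rw [ip_adj]
    unfold ip
    rw [Finset.mul_sum]
    apply Finset.sum_congr rfl
    intro I _
    by_cases hc0 : c I = 0
    · have : Dm Ω (Um Ω c) I = 0 := by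
        have h := DU_UD (Ω := Ω) c (I := I)
        by_cases hIΩ : I ⊆ Ω
        · have := h hIΩ
          rw [hD, Um_zero] at this
          simp only [Pi.zero_apply, sub_zero] at this
          rw [this, hc0, mul_zero]
        · unfold Dm
          rw [if_neg hIΩ]
      simp [hc0, this]
    · have hIk : I ⊆ Ω ∧ I.card = k := by
        by_contra h
        exact hc0 (hsq I h)
      have h := DU_UD (Ω := Ω) c hIk.1
      rw [hD, Um_zero] at h
      simp only [Pi.zero_apply, sub_zero] at h
      rw [h, hIk.2, map_mul, Complex.conj_ofReal]
      ring
  rw [ip_self, ip_self, ← Complex.ofReal_mul] at key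
  have hreal := Complex.ofReal_inj.1 key
  have h1 : (0:ℝ) ≤ ∑ I : Finset (Fin n), Complex.normSq (Um Ω c I) :=
    Finset.sum_nonneg fun I _ => Complex.normSq_nonneg _
  have h2' : (0:ℝ) ≤ ∑ I : Finset (Fin n), Complex.normSq (c I) :=
    Finset.sum_nonneg fun I _ => Complex.normSq_nonneg _
  have hr : ((Ω.card : ℝ) - 2 * k) < 0 := by
    have : (Ω.card : ℝ) < ((2 * k : ℕ) : ℝ) := Nat.cast_lt.2 h2
    push_cast at this
    linarith
  have hz : ∑ I : Finset (Fin n), Complex.normSq (c I) = 0 := by nlinarith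
  exact ip_self_nonneg_zero hz

def sliceL (m : Fin n) : (Finset (Fin n) → ℂ) →ₗ[ℂ] (Finset (Fin n) → ℂ) where
  toFun c := fun J => if m ∈ J then 0 else c (insert m J)
  map_add' c d := by funext J; by_cases h : m ∈ J <;> simp [h]
  map_smul' μ c := by funext J; by_cases h : m ∈ J <;> simp [h]

lemma lets_length : ∀ L : List (Fin n × Fin n), (lets L).length = 2 * L.length
  | [] => rfl
  | p :: L => by
    rw [lets_cons, List.length_cons, List.length_cons, lets_length L, List.length_cons]
    ring

lemma mem_A0c {Ω : Finset (Fin n)} {k : ℕ} {c : Finset (Fin n) → ℂ} :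
    c ∈ A0c Ω k ↔ sq Ω k c ∧ harm Ω k c := Iff.rfl

lemma lift {Ω : Finset (Fin n)} {k : ℕ} {m : Fin n} (hm : m ∈ Ω) (hbig : 2 * (k+1) ≤ Ω.card)
    {g : Finset (Fin n) → ℂ} (hg : g ∈ PTspan (Ω.erase m) k) :
    ∃ w ∈ PTspan Ω (k+1), sliceL m w = g := by
  suffices h : PTspan (Ω.erase m) k ≤ Submodule.map (sliceL m) (PTspan Ω (k+1)) by
    obtain ⟨w, hw1, hw2⟩ := h hg
    exact ⟨w, hw1, hw2⟩
  apply Submodule.span_le.2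
  rintro e ⟨L, hlen, hnd, hmem, rfl⟩
  have hmL : m ∉ lets L := fun h => (Finset.mem_erase.1 (hmem m h)).1 rfl
  -- choose a fresh letter b
  have hcardBad : (insert m (lets L).toFinset).card < Ω.card := by
    calc (insert m (lets L).toFinset).card ≤ (lets L).toFinset.card + 1 :=
          Finset.card_insert_le _ _
    _ ≤ (lets L).length + 1 := by
          have := (lets L).toFinset_card_le
          omega
    _ < Ω.card := by
          rw [lets_length L, hlen]
          omega
  have hnotsub : ¬ Ω ⊆ insert m (lets L).toFinset := fun hsub =>
    absurd (Finset.card_le_card hsub) (by omega)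
  obtain ⟨b, hbΩ, hbBad⟩ := Finset.not_subset.1 hnotsub
  have hbm : b ≠ m := fun h => hbBad (h ▸ Finset.mem_insert_self _ _)
  have hbL : b ∉ lets L := fun h => hbBad (Finset.mem_insert_of_mem (List.mem_toFinset.2 h))
  refine ⟨ptc ((m, b) :: L), Submodule.subset_span ⟨(m, b) :: L, by simp [hlen], ?_, ?_, rfl⟩, ?_⟩
  · rw [lets_cons]
    refine List.nodup_cons.2 ⟨?_, List.nodup_cons.2 ⟨hbL, hnd⟩⟩
    intro h
    rcases List.mem_cons.1 h with h | h
    · exact hbm h.symm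
    · exact hmL h
  · intro x hx
    rw [lets_cons] at hx
    rcases List.mem_cons.1 hx with rfl | hx
    · exact hm
    · rcases List.mem_cons.1 hx with rfl | hx
      · exact hbΩ
      · exact Finset.mem_of_mem_erase (hmem x hx)
  · funext J
    show (if m ∈ J then 0 else ptc ((m, b) :: L) (insert m J)) = ptc L J
    by_cases hmJ : m ∈ J
    · rw [if_pos hmJ, ptc_eq_zero_of_not_subset hnd hmJ hmL]
    · rw [if_neg hmJ]
      show mab m b (ptc L) (insert m J) = ptc L J
      unfold mab
      rw [if_pos (Finset.mem_insert_self _ _), Finset.erase_insert hmJ]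
      by_cases hbJ : b ∈ J
      · rw [if_pos (Finset.mem_insert_of_mem hbJ),
          ptc_eq_zero_of_not_subset hnd
            (Finset.mem_erase.2 ⟨Ne.symm hbm, Finset.mem_insert_self _ _⟩) hmL, sub_zero]
      · rw [if_neg (by simp [hbm, hbJ]), sub_zero]

lemma k0_mem {Ω : Finset (Fin n)} {c : Finset (Fin n) → ℂ} (hsq : sq Ω 0 c) :
    c ∈ PTspan Ω 0 := by
  have hc : c = c ∅ • ptc ([] : List (Fin n × Fin n)) := by
    funext I
    show c I = c ∅ * delta0 I
    unfold delta0
    by_cases h : I = ∅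
    · subst h; simp
    · rw [if_neg h, mul_zero]
      apply hsq
      rintro ⟨-, hcard⟩
      exact h (Finset.card_eq_zero.1 hcard)
  rw [hc]
  exact Submodule.smul_mem _ _ (Submodule.subset_span
    ⟨[], rfl, List.nodup_nil, fun x hx => absurd hx (List.not_mem_nil), rfl⟩)

theorem spanning : ∀ (N : ℕ) (Ω : Finset (Fin n)) (k : ℕ) (c : Finset (Fin n) → ℂ),
    Ω.card ≤ N → sq Ω k c → harm Ω k c → c ∈ PTspan Ω k := by
  intro N
  induction N with
  | zero =>
    intro Ω k c hcard hsq hh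
    match k with
    | 0 => exact k0_mem hsq
    | k + 1 =>
      have : c = 0 := eq_zero_of_card_lt (by omega) hsq hh
      rw [this]; exact Submodule.zero_mem _
  | succ N ih =>
    intro Ω k c hcard hsq hh
    match k with
    | 0 => exact k0_mem hsq
    | k + 1 =>
      by_cases hbig : Ω.card < 2 * (k + 1)
      · rw [eq_zero_of_card_lt hbig hsq hh]; exact Submodule.zero_mem _
      · push_neg at hbig
        have hΩpos : 0 < Ω.card := by omega
        obtain ⟨m, hm⟩ := Finset.card_pos.1 hΩpos
        have hcard' : (Ω.erase m).card ≤ N := by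
          rw [Finset.card_erase_of_mem hm]; omega
        set g : Finset (Fin n) → ℂ := fun J => if m ∈ J then 0 else c (insert m J) with hgdef
        have hgsq : sq (Ω.erase m) k g := by
          intro J hJ
          by_cases hmJ : m ∈ J
          · simp [hgdef, hmJ]
          · show (if m ∈ J then 0 else c (insert m J)) = 0
            rw [if_neg hmJ]
            apply hsq
            rintro ⟨h1, h2⟩
            refine hJ ⟨?_, ?_⟩
            · intro x hx
              exact Finset.mem_erase.2 ⟨fun h => hmJ (h ▸ hx), h1 (Finset.mem_insert_of_mem hx)⟩
            · rw [Finset.card_insert_of_notMem hmJ] at h2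
              omega
        have hgh : harm (Ω.erase m) k g := by
          intro J hJ hcardJ
          have hmJ : m ∉ J := fun h => (Finset.mem_erase.1 (hJ h)).1 rfl
          rcases Nat.eq_zero_or_pos k with rfl | hkpos
          · apply Finset.sum_eq_zero
            intro j hj
            have hjJ : j ∉ J := (Finset.mem_sdiff.1 hj).2
            apply hgsq
            rintro ⟨-, hcI⟩
            rw [Finset.card_insert_of_notMem hjJ] at hcI
            omega
          · have hterm : ∀ j ∈ (Ω.erase m) \ J, g (insert j J) = c (insert j (insert m J)) := by
              intro j hj
              have hj1 := Finset.mem_sdiff.1 hj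
              have hjm : j ≠ m := (Finset.mem_erase.1 hj1.1).1
              show (if m ∈ insert j J then 0 else c (insert m (insert j J))) = _
              rw [if_neg (by simp [hjm.symm, hmJ]), Finset.insert_comm]
            rw [Finset.sum_congr rfl hterm]
            have hdom : (Ω.erase m) \ J = Ω \ insert m J := by
              ext x
              simp only [Finset.mem_sdiff, Finset.mem_erase, Finset.mem_insert, not_or]
              tauto
            rw [hdom]
            apply hh
            · exact Finset.insert_subset hm (fun x hx => Finset.mem_of_mem_erase (hJ hx))
            · rw [Finset.card_insert_of_notMem hmJ]
              omega
        have hgmem : g ∈ PTspan (Ω.erase m) k := ih _ _ _ hcard' hgsq hgh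
        obtain ⟨w, hwspan, hwslice⟩ := lift hm hbig hgmem
        have hwA := PTspan_le_A0c Ω (k+1) hwspan
        have hcwA : sq Ω (k+1) (c - w) ∧ harm Ω (k+1) (c - w) :=
          (A0c Ω (k+1)).sub_mem ⟨hsq, hh⟩ hwA
        have h'm : ∀ I, m ∈ I → (c - w) I = 0 := by
          intro I hmI
          have := congrFun hwslice (I.erase m)
          show c I - w I = 0
          simp only [sliceL, LinearMap.coe_mk, AddHom.coe_mk, hgdef,
            if_neg (Finset.notMem_erase m I), Finset.insert_erase hmI] at this
          rw [this, sub_self]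
        have h'sq : sq (Ω.erase m) (k+1) (c - w) := by
          intro I hI
          by_cases hmI : m ∈ I
          · exact h'm I hmI
          · apply hcwA.1
            rintro ⟨h1, h2⟩
            exact hI ⟨fun x hx => Finset.mem_erase.2 ⟨fun h => hmI (h ▸ hx), h1 hx⟩, h2⟩
        have h'h : harm (Ω.erase m) (k+1) (c - w) := by
          intro J hJ hcardJ
          have hmJ : m ∉ J := fun h => (Finset.mem_erase.1 (hJ h)).1 rfl
          have hdom : Ω \ J = insert m ((Ω.erase m) \ J) := by
            ext x
            simp only [Finset.mem_sdiff, Finset.mem_erase, Finset.mem_insert]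
            constructor
            · rintro ⟨h1, h2⟩
              by_cases hxm : x = m
              · exact Or.inl hxm
              · exact Or.inr ⟨⟨hxm, h1⟩, h2⟩
            · rintro (rfl | ⟨⟨h1, h2⟩, h3⟩)
              · exact ⟨hm, hmJ⟩
              · exact ⟨h2, h3⟩
          have hfull := hcwA.2 J (fun x hx => Finset.mem_of_mem_erase (hJ hx)) hcardJ
          rw [hdom, Finset.sum_insert (by simp), h'm (insert m J) (Finset.mem_insert_self _ _)]
            at hfull
          rw [← hfull, zero_add]
        have h'mem : (c - w) ∈ PTspan Ω (k+1) :=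
          PTspan_mono (Finset.erase_subset _ _) _ (ih _ _ _ hcard' h'sq h'h)
        have : c = w + (c - w) := by ring
        rw [this]
        exact Submodule.add_mem _ hwspan h'mem

def cAct (σ : Equiv.Perm (Fin n)) (c : Finset (Fin n) → ℂ) : Finset (Fin n) → ℂ :=
  fun I => c (I.image σ.symm)

lemma cAct_cAct (σ τ : Equiv.Perm (Fin n)) (c : Finset (Fin n) → ℂ) :
    cAct σ (cAct τ c) = cAct (σ * τ) c := by
  funext I
  show c ((I.image σ.symm).image τ.symm) = c (I.image (σ * τ).symm)
  rw [Finset.image_image]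
  rfl

lemma cAct_sub (σ : Equiv.Perm (Fin n)) (c d : Finset (Fin n) → ℂ) :
    cAct σ (c - d) = cAct σ c - cAct σ d := rfl

lemma cAct_smul (σ : Equiv.Perm (Fin n)) (μ : ℂ) (c : Finset (Fin n) → ℂ) :
    cAct σ (μ • c) = μ • cAct σ c := rfl

lemma mem_image_perm {σ : Equiv.Perm (Fin n)} {I : Finset (Fin n)} {y : Fin n} :
    y ∈ I.image σ ↔ σ.symm y ∈ I := by
  constructor
  · rintro h
    obtain ⟨z, hz, rfl⟩ := Finset.mem_image.1 h
    rwa [Equiv.symm_apply_apply]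
  · intro h
    exact Finset.mem_image.2 ⟨σ.symm y, h, Equiv.apply_symm_apply σ y⟩

lemma image_swap_fix {a b : Fin n} {K : Finset (Fin n)}
    (h : ∀ y ∈ K, y ≠ a ∧ y ≠ b) : K.image (Equiv.swap a b) = K := by
  rw [show K.image ⇑(Equiv.swap a b) = K.image id from
    Finset.image_congr (fun y hy => Equiv.swap_apply_of_ne_of_ne (h y hy).1 (h y hy).2)]
  exact Finset.image_id

lemma cAct_mab (σ : Equiv.Perm (Fin n)) (a b : Fin n) (x : Finset (Fin n) → ℂ) :
    cAct σ (mab a b x) = mab (σ a) (σ b) (cAct σ x) := by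
  funext I
  show mab a b x (I.image σ.symm) = _
  unfold mab
  have hma : a ∈ I.image σ.symm ↔ σ a ∈ I := by
    rw [show (⇑σ.symm : Fin n → Fin n) = ⇑(σ.symm) from rfl, mem_image_perm]
    simp
  have hmb : b ∈ I.image σ.symm ↔ σ b ∈ I := by
    rw [mem_image_perm]; simp
  have hea : (I.image σ.symm).erase a = (I.erase (σ a)).image σ.symm := by
    rw [Finset.image_erase σ.symm.injective, Equiv.symm_apply_apply]
  have heb : (I.image σ.symm).erase b = (I.erase (σ b)).image σ.symm := by
    rw [Finset.image_erase σ.symm.injective, Equiv.symm_apply_apply]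
  show (if a ∈ I.image σ.symm then x ((I.image σ.symm).erase a) else 0)
      - (if b ∈ I.image σ.symm then x ((I.image σ.symm).erase b) else 0)
    = (if σ a ∈ I then cAct σ x (I.erase (σ a)) else 0)
      - (if σ b ∈ I then cAct σ x (I.erase (σ b)) else 0)
  rw [hea, heb]
  by_cases h1 : σ a ∈ I <;> by_cases h2 : σ b ∈ I <;>
    simp [hma, hmb, h1, h2, cAct]

lemma cAct_delta0 (σ : Equiv.Perm (Fin n)) : cAct σ (delta0 : Finset (Fin n) → ℂ) = delta0 := by
  funext I
  show delta0 (I.image σ.symm) = delta0 I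
  unfold delta0
  by_cases h : I = ∅
  · subst h; simp
  · rw [if_neg (by simpa using h), if_neg h]

lemma lets_map (σ : Equiv.Perm (Fin n)) :
    ∀ L : List (Fin n × Fin n), lets (L.map (fun p => (σ p.1, σ p.2))) = (lets L).map σ
  | [] => rfl
  | p :: L => by
    rw [List.map_cons, lets_cons, lets_cons, lets_map σ L, List.map_cons, List.map_cons]

lemma ptc_map (σ : Equiv.Perm (Fin n)) :
    ∀ L : List (Fin n × Fin n), ptc (L.map (fun p => (σ p.1, σ p.2))) = cAct σ (ptc L)
  | [] => (cAct_delta0 σ).symm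
  | p :: L => by
    rw [List.map_cons]
    show mab (σ p.1) (σ p.2) (ptc (L.map _)) = cAct σ (mab p.1 p.2 (ptc L))
    rw [ptc_map σ L, cAct_mab]

def kapS : List (Fin n × Fin n) → (Finset (Fin n) → ℂ) → (Finset (Fin n) → ℂ)
  | [], c => c
  | p :: L, c => kapS L (c - cAct (Equiv.swap p.1 p.2) c)

lemma kapS_mem {P : Submodule ℂ (Finset (Fin n) → ℂ)}
    (hP : ∀ (σ : Equiv.Perm (Fin n)) (c), c ∈ P → cAct σ c ∈ P) :
    ∀ (L : List (Fin n × Fin n)) (c), c ∈ P → kapS L c ∈ P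
  | [], c, hc => hc
  | p :: L, c, hc => kapS_mem hP L _ (P.sub_mem hc (hP _ _ hc))

lemma kapS_sub : ∀ (L : List (Fin n × Fin n)) (c d : Finset (Fin n) → ℂ),
    kapS L (c - d) = kapS L c - kapS L d
  | [], c, d => rfl
  | p :: L, c, d => by
    show kapS L _ = _
    rw [cAct_sub]
    rw [show c - d - (cAct (Equiv.swap p.1 p.2) c - cAct (Equiv.swap p.1 p.2) d)
      = (c - cAct (Equiv.swap p.1 p.2) c) - (d - cAct (Equiv.swap p.1 p.2) d) by abel]
    exact kapS_sub L _ _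

lemma kapS_smul : ∀ (L : List (Fin n × Fin n)) (μ : ℂ) (c : Finset (Fin n) → ℂ),
    kapS L (μ • c) = μ • kapS L c
  | [], μ, c => rfl
  | p :: L, μ, c => by
    show kapS L (μ • c - cAct (Equiv.swap p.1 p.2) (μ • c))
      = μ • kapS L (c - cAct (Equiv.swap p.1 p.2) c)
    rw [cAct_smul, ← smul_sub, kapS_smul L]

lemma swap_commute {a b u v : Fin n} (h1 : u ≠ a) (h2 : u ≠ b) (h3 : v ≠ a) (h4 : v ≠ b) :
    Commute (Equiv.swap a b) (Equiv.swap u v) := by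
  apply Equiv.Perm.Disjoint.commute
  intro x
  by_cases hxa : x = a
  · subst hxa; right; exact Equiv.swap_apply_of_ne_of_ne (Ne.symm h1) (Ne.symm h3)
  · by_cases hxb : x = b
    · subst hxb; right; exact Equiv.swap_apply_of_ne_of_ne (Ne.symm h2) (Ne.symm h4)
    · left; exact Equiv.swap_apply_of_ne_of_ne hxa hxb

lemma cAct_kapS_swap {a b : Fin n} :
    ∀ (L : List (Fin n × Fin n)), a ∉ lets L → b ∉ lets L →
      ∀ c, cAct (Equiv.swap a b) (kapS L c) = kapS L (cAct (Equiv.swap a b) c)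
  | [], _, _, c => rfl
  | q :: L, ha, hb, c => by
    have haL : a ∉ lets L := fun h => ha (by rw [lets_cons]; exact List.mem_cons_of_mem _ (List.mem_cons_of_mem _ h))
    have hbL : b ∉ lets L := fun h => hb (by rw [lets_cons]; exact List.mem_cons_of_mem _ (List.mem_cons_of_mem _ h))
    have ha1 : q.1 ≠ a := fun h => ha (by rw [lets_cons]; exact h ▸ List.mem_cons_self)
    have ha2 : q.2 ≠ a := fun h => ha (by rw [lets_cons]; exact List.mem_cons_of_mem _ (h ▸ List.mem_cons_self))
    have hb1 : q.1 ≠ b := fun h => hb (by rw [lets_cons]; exact h ▸ List.mem_cons_self)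
    have hb2 : q.2 ≠ b := fun h => hb (by rw [lets_cons]; exact List.mem_cons_of_mem _ (h ▸ List.mem_cons_self))
    show cAct (Equiv.swap a b) (kapS L (c - cAct (Equiv.swap q.1 q.2) c))
      = kapS L (cAct (Equiv.swap a b) c - cAct (Equiv.swap q.1 q.2) (cAct (Equiv.swap a b) c))
    rw [cAct_kapS_swap L haL hbL, cAct_sub, cAct_cAct, cAct_cAct,
      (swap_commute ha1 hb1 ha2 hb2).eq]

lemma kapS_mab {a b : Fin n} :
    ∀ (L : List (Fin n × Fin n)), a ∉ lets L → b ∉ lets L →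
      ∀ x, kapS L (mab a b x) = mab a b (kapS L x)
  | [], _, _, x => rfl
  | q :: L, ha, hb, x => by
    have haL : a ∉ lets L := fun h => ha (by rw [lets_cons]; exact List.mem_cons_of_mem _ (List.mem_cons_of_mem _ h))
    have hbL : b ∉ lets L := fun h => hb (by rw [lets_cons]; exact List.mem_cons_of_mem _ (List.mem_cons_of_mem _ h))
    have ha1 : q.1 ≠ a := fun h => ha (by rw [lets_cons]; exact h ▸ List.mem_cons_self)
    have ha2 : q.2 ≠ a := fun h => ha (by rw [lets_cons]; exact List.mem_cons_of_mem _ (h ▸ List.mem_cons_self))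
    have hb1 : q.1 ≠ b := fun h => hb (by rw [lets_cons]; exact h ▸ List.mem_cons_self)
    have hb2 : q.2 ≠ b := fun h => hb (by rw [lets_cons]; exact List.mem_cons_of_mem _ (h ▸ List.mem_cons_self))
    show kapS L (mab a b x - cAct (Equiv.swap q.1 q.2) (mab a b x)) = _
    have : cAct (Equiv.swap q.1 q.2) (mab a b x) = mab a b (cAct (Equiv.swap q.1 q.2) x) := by
      rw [cAct_mab, Equiv.swap_apply_of_ne_of_ne (Ne.symm ha1) (Ne.symm ha2),
        Equiv.swap_apply_of_ne_of_ne (Ne.symm hb1) (Ne.symm hb2)]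
    rw [this, show mab a b x - mab a b (cAct (Equiv.swap q.1 q.2) x)
        = mab a b (x - cAct (Equiv.swap q.1 q.2) x) by
      funext I; show _ = (if a ∈ I then _ else 0) - (if b ∈ I then _ else 0)
      by_cases h1 : a ∈ I <;> by_cases h2 : b ∈ I <;> simp [mab, h1, h2] <;> ring]
    exact kapS_mab L haL hbL _

lemma cAct_swap_apply (a b : Fin n) (c : Finset (Fin n) → ℂ) (I : Finset (Fin n)) :
    cAct (Equiv.swap a b) c I = c (I.image (Equiv.swap a b)) := by
  show c (I.image ⇑(Equiv.swap a b).symm) = _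
  rw [Equiv.symm_swap]

lemma image_swap_swap (a b : Fin n) (I : Finset (Fin n)) :
    (I.image (Equiv.swap a b)).image (Equiv.swap a b) = I := by
  rw [Finset.image_image]
  rw [show (⇑(Equiv.swap a b) ∘ ⇑(Equiv.swap a b)) = id from funext fun z => Equiv.swap_apply_self a b z]
  exact Finset.image_id

lemma mem_image_swap {a b y : Fin n} {I : Finset (Fin n)} :
    y ∈ I.image (Equiv.swap a b) ↔ Equiv.swap a b y ∈ I := by
  rw [mem_image_perm, Equiv.symm_swap]

lemma image_swap_of_both {a b : Fin n} {I : Finset (Fin n)} (ha : a ∈ I) (hb : b ∈ I) :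
    I.image (Equiv.swap a b) = I := by
  ext y
  rw [mem_image_swap]
  by_cases hya : y = a
  · subst hya; rw [Equiv.swap_apply_left]; exact ⟨fun _ => ha, fun _ => hb⟩
  · by_cases hyb : y = b
    · subst hyb; rw [Equiv.swap_apply_right]; exact ⟨fun _ => hb, fun _ => ha⟩
    · rw [Equiv.swap_apply_of_ne_of_ne hya hyb]

lemma image_swap_of_none {a b : Fin n} {I : Finset (Fin n)} (ha : a ∉ I) (hb : b ∉ I) :
    I.image (Equiv.swap a b) = I := by
  ext y
  rw [mem_image_swap]
  by_cases hya : y = a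
  · subst hya; rw [Equiv.swap_apply_left]; exact ⟨fun h => absurd h hb, fun h => absurd h ha⟩
  · by_cases hyb : y = b
    · subst hyb; rw [Equiv.swap_apply_right]; exact ⟨fun h => absurd h ha, fun h => absurd h hb⟩
    · rw [Equiv.swap_apply_of_ne_of_ne hya hyb]

lemma image_swap_of_left {a b : Fin n} {I : Finset (Fin n)} (ha : a ∈ I) (hb : b ∉ I) :
    I.image (Equiv.swap a b) = insert b (I.erase a) := by
  have hab : a ≠ b := fun h => hb (h ▸ ha)
  ext y
  rw [mem_image_swap, Finset.mem_insert, Finset.mem_erase]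
  by_cases hya : y = a
  · subst hya
    rw [Equiv.swap_apply_left]
    exact ⟨fun h => absurd h hb, by rintro (h | h); exact absurd h hab; exact absurd rfl h.1⟩
  · by_cases hyb : y = b
    · subst hyb
      rw [Equiv.swap_apply_right]
      exact ⟨fun _ => Or.inl rfl, fun _ => ha⟩
    · rw [Equiv.swap_apply_of_ne_of_ne hya hyb]
      exact ⟨fun h => Or.inr ⟨hya, h⟩, by rintro (h | h); exact absurd h hyb; exact h.2⟩

lemma mab_smul (a b : Fin n) (μ : ℂ) (x : Finset (Fin n) → ℂ) :
    mab a b (μ • x) = μ • mab a b x := by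
  funext I
  show (if a ∈ I then μ * x (I.erase a) else 0) - (if b ∈ I then μ * x (I.erase b) else 0)
    = μ * ((if a ∈ I then x (I.erase a) else 0) - (if b ∈ I then x (I.erase b) else 0))
  by_cases h1 : a ∈ I <;> by_cases h2 : b ∈ I <;> simp [h1, h2] <;> ring

lemma ip_sub_left (c d x : Finset (Fin n) → ℂ) : ip (c - d) x = ip c x - ip d x := by
  unfold ip
  rw [← Finset.sum_sub_distrib]
  apply Finset.sum_congr rfl
  intro I _
  show (c I - d I) * _ = _
  ring

lemma ip_sub_right (c x y : Finset (Fin n) → ℂ) : ip c (x - y) = ip c x - ip c y := by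
  unfold ip
  rw [← Finset.sum_sub_distrib]
  apply Finset.sum_congr rfl
  intro I _
  show c I * (starRingEnd ℂ) (x I - y I) = _
  rw [map_sub]
  ring

lemma ip_smul_right (μ : ℂ) (c d : Finset (Fin n) → ℂ) :
    ip c (μ • d) = (starRingEnd ℂ) μ * ip c d := by
  unfold ip
  rw [Finset.mul_sum]
  apply Finset.sum_congr rfl
  intro I _
  show c I * (starRingEnd ℂ) (μ * d I) = _
  rw [map_mul]
  ring

lemma ip_cAct (σ : Equiv.Perm (Fin n)) (c d : Finset (Fin n) → ℂ) :
    ip (cAct σ c) d = ip c (cAct σ.symm d) := by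
  unfold ip
  apply Finset.sum_nbij' (i := fun I => I.image σ.symm) (j := fun K => K.image σ)
  · intro I _; exact Finset.mem_univ _
  · intro I _; exact Finset.mem_univ _
  · intro I _
    rw [Finset.image_image, show (⇑σ ∘ ⇑σ.symm) = id from funext fun z => Equiv.apply_symm_apply σ z]
    exact Finset.image_id
  · intro K _
    rw [Finset.image_image, show (⇑σ.symm ∘ ⇑σ) = id from funext fun z => Equiv.symm_apply_apply σ z]
    exact Finset.image_id
  · intro I _
    show cAct σ c I * _ = c (I.image σ.symm) * (starRingEnd ℂ) (cAct σ.symm d (I.image σ.symm))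
    congr 2
    show d I = d ((I.image σ.symm).image σ.symm.symm)
    rw [Equiv.symm_symm, Finset.image_image,
      show (⇑σ ∘ ⇑σ.symm) = id from funext fun z => Equiv.apply_symm_apply σ z]
    rw [Finset.image_id]

lemma ip_kapS : ∀ (L : List (Fin n × Fin n)), (lets L).Nodup →
    ∀ c d, ip (kapS L c) d = ip c (kapS L d)
  | [], _, c, d => rfl
  | p :: L, hnd, c, d => by
    obtain ⟨hab, haL, hbL, hndL⟩ := nodup_cons_facts hnd
    show ip (kapS L (c - cAct (Equiv.swap p.1 p.2) c)) d
      = ip c (kapS L (d - cAct (Equiv.swap p.1 p.2) d))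
    rw [ip_kapS L hndL, ip_sub_left, ip_cAct, Equiv.symm_swap,
      cAct_kapS_swap L haL hbL, ← ip_sub_right, ← kapS_sub]

lemma kapS_ptc : ∀ (L : List (Fin n × Fin n)), (lets L).Nodup →
    kapS L (ptc L) = ((2:ℂ) ^ L.length) • ptc L
  | [], _ => by
    show ptc [] = ((2:ℂ) ^ 0) • ptc []
    rw [pow_zero, one_smul]
  | p :: L, hnd => by
    obtain ⟨hab, haL, hbL, hndL⟩ := nodup_cons_facts hnd
    have hva : ∀ I, p.1 ∈ I → ptc L I = 0 := fun I h => ptc_eq_zero_of_not_subset hndL h haL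
    have hvb : ∀ I, p.2 ∈ I → ptc L I = 0 := fun I h => ptc_eq_zero_of_not_subset hndL h hbL
    have hkey : cAct (Equiv.swap p.1 p.2) (mab p.1 p.2 (ptc L)) = - mab p.1 p.2 (ptc L) := by
      funext I
      rw [cAct_swap_apply]
      show (if p.1 ∈ I.image (Equiv.swap p.1 p.2) then
          ptc L ((I.image (Equiv.swap p.1 p.2)).erase p.1) else 0)
        - (if p.2 ∈ I.image (Equiv.swap p.1 p.2) then
          ptc L ((I.image (Equiv.swap p.1 p.2)).erase p.2) else 0)
        = -((if p.1 ∈ I then ptc L (I.erase p.1) else 0)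
          - (if p.2 ∈ I then ptc L (I.erase p.2) else 0))
      have hm1 : p.1 ∈ I.image (Equiv.swap p.1 p.2) ↔ p.2 ∈ I := by
        rw [mem_image_swap, Equiv.swap_apply_left]
      have hm2 : p.2 ∈ I.image (Equiv.swap p.1 p.2) ↔ p.1 ∈ I := by
        rw [mem_image_swap, Equiv.swap_apply_right]
      by_cases h1 : p.1 ∈ I <;> by_cases h2 : p.2 ∈ I
      · rw [if_pos (hm1.2 h2), if_pos (hm2.2 h1), if_pos h1, if_pos h2,
          image_swap_of_both h1 h2,
          hvb _ (Finset.mem_erase.2 ⟨Ne.symm hab, h2⟩), hva _ (Finset.mem_erase.2 ⟨hab, h1⟩)]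
        ring
      · rw [if_neg (fun h => h2 (hm1.1 h)), if_pos (hm2.2 h1), if_pos h1, if_neg h2,
          image_swap_of_left h1 h2,
          Finset.erase_insert (fun h => h2 (Finset.mem_of_mem_erase h))]
        ring
      · rw [if_pos (hm1.2 h2), if_neg (fun h => h1 (hm2.1 h)), if_neg h1, if_pos h2,
          Equiv.swap_comm, image_swap_of_left h2 h1,
          Finset.erase_insert (fun h => h1 (Finset.mem_of_mem_erase h))]
        ring
      · rw [if_neg (fun h => h2 (hm1.1 h)), if_neg (fun h => h1 (hm2.1 h)),
          if_neg h1, if_neg h2]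
        ring
    show kapS L (mab p.1 p.2 (ptc L) - cAct (Equiv.swap p.1 p.2) (mab p.1 p.2 (ptc L)))
      = ((2:ℂ) ^ (L.length + 1)) • mab p.1 p.2 (ptc L)
    rw [hkey, sub_neg_eq_add, ← two_smul ℂ, kapS_smul, kapS_mab L haL hbL, kapS_ptc L hndL,
      mab_smul, smul_smul, pow_succ, mul_comm]

lemma sub_cAct_swap_eq_mab {a b : Fin n} (hab : a ≠ b) (c : Finset (Fin n) → ℂ) :
    c - cAct (Equiv.swap a b) c
      = mab a b (fun K => if a ∈ K ∨ b ∈ K then 0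
          else c (insert a K) - c ((insert a K).image (Equiv.swap a b))) := by
  funext I
  show c I - cAct (Equiv.swap a b) c I
    = (if a ∈ I then (if a ∈ I.erase a ∨ b ∈ I.erase a then 0
        else c (insert a (I.erase a)) - c ((insert a (I.erase a)).image (Equiv.swap a b))) else 0)
    - (if b ∈ I then (if a ∈ I.erase b ∨ b ∈ I.erase b then 0
        else c (insert a (I.erase b)) - c ((insert a (I.erase b)).image (Equiv.swap a b))) else 0)
  rw [cAct_swap_apply]
  by_cases h1 : a ∈ I <;> by_cases h2 : b ∈ I
  · rw [if_pos h1, if_pos h2,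
      if_pos (Or.inr (Finset.mem_erase.2 ⟨Ne.symm hab, h2⟩)),
      if_pos (Or.inl (Finset.mem_erase.2 ⟨hab, h1⟩)),
      image_swap_of_both h1 h2]
    ring
  · rw [if_pos h1, if_neg h2,
      if_neg (by
        push_neg
        exact ⟨Finset.notMem_erase _ _, fun h => h2 (Finset.mem_of_mem_erase h)⟩),
      Finset.insert_erase h1]
    ring
  · have him : insert a (I.erase b) = I.image (Equiv.swap a b) := by
      rw [Equiv.swap_comm, image_swap_of_left h2 h1]
    rw [if_neg h1, if_pos h2,
      if_neg (by
        push_neg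
        exact ⟨fun h => h1 (Finset.mem_of_mem_erase h), Finset.notMem_erase _ _⟩),
      him, image_swap_swap]
    ring
  · rw [if_neg h1, if_neg h2, image_swap_of_none h1 h2]
    ring

lemma kapS_eq_smul : ∀ (L : List (Fin n × Fin n)), (lets L).Nodup →
    ∀ c, sq Finset.univ L.length c → ∃ μ : ℂ, kapS L c = μ • ptc L
  | [], _, c, hsq => by
    refine ⟨c ∅, ?_⟩
    funext I
    show c I = c ∅ * delta0 I
    unfold delta0
    by_cases h : I = ∅
    · subst h; simp
    · rw [if_neg h, mul_zero]
      exact hsq I (by rintro ⟨-, hcard⟩; exact h (Finset.card_eq_zero.1 hcard))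
  | p :: L, hnd, c, hsq => by
    obtain ⟨hab, haL, hbL, hndL⟩ := nodup_cons_facts hnd
    have hc'sq : sq Finset.univ (L.length + 1) (c - cAct (Equiv.swap p.1 p.2) c) := by
      intro I hI
      have h1 : c I = 0 := hsq I hI
      have h2 : cAct (Equiv.swap p.1 p.2) c I = 0 := by
        rw [cAct_swap_apply]
        apply hsq
        rintro ⟨-, hcard⟩
        exact hI ⟨Finset.subset_univ _, by
          rw [← Finset.card_image_of_injective I (Equiv.swap p.1 p.2).injective, hcard]
          rfl⟩
      show c I - cAct (Equiv.swap p.1 p.2) c I = 0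
      rw [h1, h2, sub_zero]
    have hxsq : sq Finset.univ L.length (fun K => if p.1 ∈ K ∨ p.2 ∈ K then 0
        else c (insert p.1 K) - c ((insert p.1 K).image (Equiv.swap p.1 p.2))) := by
      intro K hK
      show (if p.1 ∈ K ∨ p.2 ∈ K then 0
        else c (insert p.1 K) - c ((insert p.1 K).image (Equiv.swap p.1 p.2))) = 0
      split_ifs with h
      · rfl
      · push_neg at h
        have hmem := hc'sq (insert p.1 K) (by
          rintro ⟨-, hcard⟩
          rw [Finset.card_insert_of_notMem h.1] at hcard
          exact hK ⟨Finset.subset_univ _, by omega⟩)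
        show c (insert p.1 K) - c ((insert p.1 K).image (Equiv.swap p.1 p.2)) = 0
        rw [show (c - cAct (Equiv.swap p.1 p.2) c) (insert p.1 K)
            = c (insert p.1 K) - c ((insert p.1 K).image (Equiv.swap p.1 p.2)) from by
          rw [Pi.sub_apply, cAct_swap_apply]] at hmem
        exact hmem
    obtain ⟨μ, hμ⟩ := kapS_eq_smul L hndL _ hxsq
    refine ⟨μ, ?_⟩
    show kapS L (c - cAct (Equiv.swap p.1 p.2) c) = μ • ptc (p :: L)
    rw [sub_cAct_swap_eq_mab hab c, kapS_mab L haL hbL, hμ, mab_smul]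
    rfl

lemma mem_lets_fst {q : Fin n × Fin n} {M : List (Fin n × Fin n)} (hq : q ∈ M) :
    q.1 ∈ lets M := List.mem_flatMap.2 ⟨q, hq, List.mem_cons_self⟩

lemma mem_lets_snd {q : Fin n × Fin n} {M : List (Fin n × Fin n)} (hq : q ∈ M) :
    q.2 ∈ lets M := List.mem_flatMap.2 ⟨q, hq, List.mem_cons_of_mem _ (List.mem_cons_self)⟩

lemma exists_perm : ∀ (L M : List (Fin n × Fin n)), (lets L).Nodup → (lets M).Nodup →
    L.length = M.length → ∃ σ : Equiv.Perm (Fin n), L.map (fun p => (σ p.1, σ p.2)) = M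
  | [], [], _, _, _ => ⟨1, rfl⟩
  | [], q :: M, _, _, h => absurd h (by simp)
  | p :: L, [], _, _, h => absurd h (by simp)
  | p :: L, q :: M, hndL, hndM, hlen => by
    obtain ⟨habL, haL, hbL, hndL'⟩ := nodup_cons_facts hndL
    obtain ⟨habM, haM, hbM, hndM'⟩ := nodup_cons_facts hndM
    obtain ⟨τ, hτ⟩ := exists_perm L M hndL' hndM' (by simpa using hlen)
    have hx12 : τ p.1 ≠ τ p.2 := fun h => habL (τ.injective h)
    have hletsM : lets M = (lets L).map τ := by rw [← hτ, lets_map]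
    have hmapM : ∀ z, z ∈ lets L → τ z ∈ lets M := fun z hz =>
      hletsM ▸ List.mem_map.2 ⟨z, hz, rfl⟩
    have hx1M : τ p.1 ∉ lets M := by
      rw [hletsM]
      intro h
      obtain ⟨z, hz, hze⟩ := List.mem_map.1 h
      exact haL (by rwa [τ.injective hze] at hz)
    have hx2M : τ p.2 ∉ lets M := by
      rw [hletsM]
      intro h
      obtain ⟨z, hz, hze⟩ := List.mem_map.1 h
      exact hbL (by rwa [τ.injective hze] at hz)
    set x1 := τ p.1
    set x2 := τ p.2
    set y1 := q.1
    set y2 := q.2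
    set x2' := Equiv.swap x1 y1 x2 with hx2'def
    set σ2 := Equiv.swap x2' y2 * Equiv.swap x1 y1 with hσ2def
    have hx2'y1 : x2' ≠ y1 := by
      rw [hx2'def]
      intro h
      exact hx12 (((Equiv.swap x1 y1).injective (h.trans (Equiv.swap_apply_left x1 y1).symm)).symm)
    have hσ2x1 : σ2 x1 = y1 := by
      rw [hσ2def, Equiv.Perm.mul_apply, Equiv.swap_apply_left,
        Equiv.swap_apply_of_ne_of_ne (Ne.symm hx2'y1) habM]
    have hσ2x2 : σ2 x2 = y2 := by
      rw [hσ2def, Equiv.Perm.mul_apply, ← hx2'def, Equiv.swap_apply_left]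
    have hx2'cases : x2' = x2 ∨ x2' = y1 ∨ x2' = x1 := by
      rw [hx2'def]
      by_cases h1 : x2 = x1
      · rw [h1, Equiv.swap_apply_left]; exact Or.inr (Or.inl rfl)
      · by_cases h2 : x2 = y1
        · rw [h2, Equiv.swap_apply_right]; exact Or.inr (Or.inr rfl)
        · rw [Equiv.swap_apply_of_ne_of_ne h1 h2]; exact Or.inl rfl
    have hσ2fix : ∀ z ∈ lets M, σ2 z = z := by
      intro z hz
      have hz1 : z ≠ x1 := fun h => hx1M (h ▸ hz)
      have hz2 : z ≠ x2 := fun h => hx2M (h ▸ hz)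
      have hzy1 : z ≠ y1 := fun h => haM (h ▸ hz)
      have hzy2 : z ≠ y2 := fun h => hbM (h ▸ hz)
      have hzx2' : z ≠ x2' := by
        rcases hx2'cases with h | h | h <;> rw [h] <;> assumption
      rw [hσ2def, Equiv.Perm.mul_apply, Equiv.swap_apply_of_ne_of_ne hz1 hzy1,
        Equiv.swap_apply_of_ne_of_ne hzx2' hzy2]
    refine ⟨σ2 * τ, ?_⟩
    rw [List.map_cons]
    have hhead : ((σ2 * τ) p.1, (σ2 * τ) p.2) = q := by
      have e1 : (σ2 * τ) p.1 = y1 := by rw [Equiv.Perm.mul_apply]; exact hσ2x1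
      have e2 : (σ2 * τ) p.2 = y2 := by rw [Equiv.Perm.mul_apply]; exact hσ2x2
      rw [e1, e2]
    have htail : List.map (fun p' => ((σ2 * τ) p'.1, (σ2 * τ) p'.2)) L = M := by
      have hcomp : List.map (fun p' => ((σ2 * τ) p'.1, (σ2 * τ) p'.2)) L
          = List.map (fun p' => (σ2 p'.1, σ2 p'.2)) (List.map (fun p' => (τ p'.1, τ p'.2)) L) := by
        rw [List.map_map]
        rfl
      rw [hcomp, hτ]
      have : ∀ r ∈ M, (fun p' : Fin n × Fin n => (σ2 p'.1, σ2 p'.2)) r = id r := by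
        intro r hr
        show (σ2 r.1, σ2 r.2) = r
        rw [hσ2fix _ (mem_lets_fst hr), hσ2fix _ (mem_lets_snd hr)]
      rw [List.map_congr_left this, List.map_id]
    rw [hhead, htail]

lemma toPoly_zero : toPoly (0 : Finset (Fin n) → ℂ) = 0 := by
  unfold toPoly
  simp

def toPolyL : (Finset (Fin n) → ℂ) →ₗ[ℂ] MvPolynomial (Fin n) ℂ where
  toFun := toPoly
  map_add' c d := by
    unfold toPoly
    rw [← Finset.sum_add_distrib]
    apply Finset.sum_congr rfl
    intro I _
    show (c I + d I) • xI n I = _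
    rw [add_smul]
  map_smul' μ c := by
    unfold toPoly
    simp only [RingHom.id_apply]
    rw [Finset.smul_sum]
    apply Finset.sum_congr rfl
    intro I _
    show (μ * c I) • xI n I = μ • c I • xI n I
    rw [mul_smul]

lemma rename_xI (σ : Equiv.Perm (Fin n)) (I : Finset (Fin n)) :
    rename σ (xI n I) = xI n (I.image σ) := by
  unfold xI
  rw [map_prod]
  rw [Finset.prod_image (fun x _ y _ h => σ.injective h)]
  apply Finset.prod_congr rfl
  intro i _
  rw [rename_X]

lemma rename_toPoly (σ : Equiv.Perm (Fin n)) (c : Finset (Fin n) → ℂ) :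
    rename σ (toPoly c) = toPoly (cAct σ c) := by
  unfold toPoly
  rw [map_sum]
  have step : ∀ I ∈ Finset.univ, rename σ (c I • xI n I) = c I • xI n (I.image σ) := by
    intro I _
    rw [map_smul, rename_xI]
  rw [Finset.sum_congr rfl step]
  apply Finset.sum_nbij' (i := fun I => I.image σ) (j := fun K => K.image σ.symm)
  · intro I _; exact Finset.mem_univ _
  · intro I _; exact Finset.mem_univ _
  · intro I _
    rw [Finset.image_image, show (⇑σ.symm ∘ ⇑σ) = id from funext fun z => Equiv.symm_apply_apply σ z]
    exact Finset.image_id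
  · intro K _
    rw [Finset.image_image, show (⇑σ ∘ ⇑σ.symm) = id from funext fun z => Equiv.apply_symm_apply σ z]
    exact Finset.image_id
  · intro I _
    show c I • xI n (I.image σ) = cAct σ c (I.image σ) • xI n (I.image σ)
    have he : cAct σ c (I.image σ) = c I := by
      show c ((I.image σ).image σ.symm) = c I
      rw [Finset.image_image,
        show (⇑σ.symm ∘ ⇑σ) = id from funext fun z => Equiv.symm_apply_apply σ z,
        Finset.image_id]
    rw [he]

lemma Aspace_forward {k : ℕ} {f : MvPolynomial (Fin n) ℂ} (hf : f ∈ Aspace n k) :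
    sq Finset.univ k (coeffI f) ∧ toPoly (coeffI f) = f := by
  have hf' : f ∈ Submodule.span ℂ {g | ∃ I : Finset (Fin n), I.card = k ∧ g = xI n I} := hf
  refine Submodule.span_induction
    (p := fun g _ => sq Finset.univ k (coeffI g) ∧ toPoly (coeffI g) = g) ?_ ?_ ?_ ?_ hf'
  · rintro g ⟨I, hI, rfl⟩
    constructor
    · intro J hJ
      rw [coeffI_xI]
      by_cases h : J = I
      · exact absurd ⟨Finset.subset_univ _, h ▸ hI⟩ hJ
      · rw [if_neg h]
    · unfold toPoly
      rw [Finset.sum_eq_single I (fun J _ hJ => by rw [coeffI_xI, if_neg hJ, zero_smul])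
        (fun h => absurd (Finset.mem_univ I) h)]
      rw [coeffI_xI, if_pos rfl, one_smul]
  · constructor
    · intro I _
      show coeffI 0 I = 0
      simp [coeffI]
    · show toPoly (coeffI 0) = 0
      rw [show coeffI (0 : MvPolynomial (Fin n) ℂ) = 0 from funext fun I => by simp [coeffI],
        toPoly_zero]
  · rintro x y hx hy ⟨hx1, hx2⟩ ⟨hy1, hy2⟩
    have hco : coeffI (x + y) = coeffI x + coeffI y := funext fun I => by
      simp [coeffI, coeff_add]
    constructor
    · intro I hI
      rw [hco]
      show coeffI x I + coeffI y I = 0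
      rw [hx1 I hI, hy1 I hI, add_zero]
    · rw [hco]
      show toPoly (coeffI x + coeffI y) = x + y
      rw [show toPoly (coeffI x + coeffI y) = toPoly (coeffI x) + toPoly (coeffI y) from
        (toPolyL (n := n)).map_add (coeffI x) (coeffI y), hx2, hy2]
  · rintro μ x hx ⟨hx1, hx2⟩
    have hco : coeffI (μ • x) = μ • coeffI x := funext fun I => by
      simp [coeffI, coeff_smul]
    constructor
    · intro I hI
      rw [hco]
      show μ * coeffI x I = 0
      rw [hx1 I hI, mul_zero]
    · rw [hco]
      show toPoly (μ • coeffI x) = μ • x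
      rw [show toPoly (μ • coeffI x) = μ • toPoly (coeffI x) from (toPolyL (n := n)).map_smul μ (coeffI x), hx2]

lemma toPoly_mem_Aspace {k : ℕ} {c : Finset (Fin n) → ℂ} (hc : sq Finset.univ k c) :
    toPoly c ∈ Aspace n k := by
  apply Submodule.sum_mem
  intro I _
  by_cases h : I.card = k
  · exact Submodule.smul_mem _ _ (Submodule.subset_span ⟨I, h, rfl⟩)
  · rw [hc I (by rintro ⟨-, hcard⟩; exact h hcard), zero_smul]
    exact Submodule.zero_mem _

lemma mem_A0_unfold {k : ℕ} {f : MvPolynomial (Fin n) ℂ} :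
    f ∈ A0space n k ↔ f ∈ Aspace n k ∧ ∀ J : Finset (Fin n), J.card = k - 1 →
      ∑ j ∈ Jᶜ, coeffI f (insert j J) = 0 := Iff.rfl

lemma A0_forward {k : ℕ} {f : MvPolynomial (Fin n) ℂ} (hf : f ∈ A0space n k) :
    sq Finset.univ k (coeffI f) ∧ harm Finset.univ k (coeffI f) ∧ toPoly (coeffI f) = f := by
  obtain ⟨hfA, hcond⟩ := mem_A0_unfold.1 hf
  obtain ⟨hsq, htp⟩ := Aspace_forward hfA
  refine ⟨hsq, ?_, htp⟩
  intro J _ hJ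
  rw [← Finset.compl_eq_univ_sdiff]
  exact hcond J hJ

lemma toPoly_mem_A0 {k : ℕ} {c : Finset (Fin n) → ℂ} (hsq : sq Finset.univ k c)
    (hh : harm Finset.univ k c) : toPoly c ∈ A0space n k := by
  rw [mem_A0_unfold]
  refine ⟨toPoly_mem_Aspace hsq, fun J hJ => ?_⟩
  rw [Finset.compl_eq_univ_sdiff]
  have : ∀ j ∈ Finset.univ \ J, coeffI (toPoly c) (insert j J) = c (insert j J) := by
    intro j _
    rw [coeffI_toPoly]
  rw [Finset.sum_congr rfl this]
  exact hh J (Finset.subset_univ _) hJ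

lemma sq_cAct {k : ℕ} {c : Finset (Fin n) → ℂ} (σ : Equiv.Perm (Fin n))
    (h : sq Finset.univ k c) : sq Finset.univ k (cAct σ c) := by
  intro I hI
  show c (I.image σ.symm) = 0
  apply h
  rintro ⟨-, hcard⟩
  refine hI ⟨Finset.subset_univ _, ?_⟩
  rw [← Finset.card_image_of_injective I σ.symm.injective]
  exact hcard

lemma harm_cAct {k : ℕ} {c : Finset (Fin n) → ℂ} (σ : Equiv.Perm (Fin n))
    (h : harm Finset.univ k c) : harm Finset.univ k (cAct σ c) := by
  intro J _ hcard
  have key : ∀ j ∈ Finset.univ \ J, cAct σ c (insert j J)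
      = c (insert (σ.symm j) (J.image σ.symm)) := by
    intro j _
    show c ((insert j J).image σ.symm) = _
    rw [Finset.image_insert]
  rw [Finset.sum_congr rfl key]
  have hre : ∑ j ∈ Finset.univ \ J, c (insert (σ.symm j) (J.image σ.symm))
      = ∑ j' ∈ Finset.univ \ J.image σ.symm, c (insert j' (J.image σ.symm)) := by
    apply Finset.sum_nbij' (i := fun j => σ.symm j) (j := fun j => σ j)
    · intro j hj
      rw [Finset.mem_sdiff] at hj ⊢
      refine ⟨Finset.mem_univ _, fun hmem => hj.2 ?_⟩
      have : σ.symm.symm (σ.symm j) ∈ J := mem_image_perm.1 hmem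
      rwa [Equiv.symm_symm, Equiv.apply_symm_apply] at this
    · intro j hj
      rw [Finset.mem_sdiff] at hj ⊢
      refine ⟨Finset.mem_univ _, fun hmem => hj.2 ?_⟩
      exact mem_image_perm.2 (by rwa [Equiv.symm_symm])
    · intro j _; exact Equiv.apply_symm_apply σ j
    · intro j _; exact Equiv.symm_apply_apply σ j
    · intro j _; rfl
  rw [hre]
  apply h _ (Finset.subset_univ _)
  rw [Finset.card_image_of_injective J σ.symm.injective]
  exact hcard

lemma rename_mem_A0 {k : ℕ} (σ : Equiv.Perm (Fin n)) {f : MvPolynomial (Fin n) ℂ}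
    (hf : f ∈ A0space n k) : rename σ f ∈ A0space n k := by
  obtain ⟨hsq, hh, htp⟩ := A0_forward hf
  rw [← htp, rename_toPoly]
  exact toPoly_mem_A0 (sq_cAct σ hsq) (harm_cAct σ hh)

lemma exists_L0 : ∀ k : ℕ, 2 * k ≤ n → ∃ L : List (Fin n × Fin n), L.length = k ∧
    (lets L).Nodup ∧ ∀ x ∈ lets L, (x : ℕ) < 2 * k
  | 0, _ => ⟨[], rfl, List.nodup_nil, by intro x hx; exact absurd hx (List.not_mem_nil)⟩
  | k + 1, hk => by
    obtain ⟨L, hlen, hnd, hbound⟩ := exists_L0 k (by omega)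
    refine ⟨(⟨2 * k, by omega⟩, ⟨2 * k + 1, by omega⟩) :: L, by simp [hlen], ?_, ?_⟩
    · rw [lets_cons]
      refine List.nodup_cons.2 ⟨?_, List.nodup_cons.2 ⟨?_, hnd⟩⟩
      · intro h
        rcases List.mem_cons.1 h with h | h
        · exact absurd (congrArg Fin.val h) (by simp)
        · exact absurd (hbound _ h) (by simp)
      · intro h
        exact absurd (hbound _ h) (by simp)
    · intro x hx
      rw [lets_cons] at hx
      rcases List.mem_cons.1 hx with rfl | hx
      · show 2 * k < 2 * (k + 1); omega
      · rcases List.mem_cons.1 hx with rfl | hx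
        · show 2 * k + 1 < 2 * (k + 1); omega
        · have := hbound _ hx; omega

lemma ip_add_right (c x y : Finset (Fin n) → ℂ) : ip c (x + y) = ip c x + ip c y := by
  unfold ip
  rw [← Finset.sum_add_distrib]
  apply Finset.sum_congr rfl
  intro I _
  show c I * (starRingEnd ℂ) (x I + y I) = _
  rw [map_add]
  ring

lemma ip_zero_right (c : Finset (Fin n) → ℂ) : ip c 0 = 0 := by
  unfold ip
  simp

lemma ip_zero_left (d : Finset (Fin n) → ℂ) : ip 0 d = 0 := by
  unfold ip
  simp


end A0aux

/-- For `0 ≤ 2k ≤ n`, the subspace `A⁰_{n,k}` is invariant under the action of the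
symmetric group `S_n` by permutation of variables, and the resulting representation
is irreducible: `A⁰_{n,k}` is a simple `ℂ[S_n]`-module, i.e. it is nonzero and has
no invariant subspaces other than `⊥` and itself. -/
theorem A0_invariant_and_irreducible (n k : ℕ) (hk : 2 * k ≤ n) :
    (∀ (σ : Equiv.Perm (Fin n)), ∀ f ∈ A0space n k, rename σ f ∈ A0space n k) ∧
    A0space n k ≠ ⊥ ∧
    (∀ W : Submodule ℂ (MvPolynomial (Fin n) ℂ), W ≤ A0space n k →
      (∀ (σ : Equiv.Perm (Fin n)), ∀ f ∈ W, rename σ f ∈ W) →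
      W = ⊥ ∨ W = A0space n k) := by
  classical
  obtain ⟨L0, hL0len, hL0nd, -⟩ := A0aux.exists_L0 k hk
  refine ⟨fun σ f hf => A0aux.rename_mem_A0 σ hf, ?_, ?_⟩
  · -- A0space is nonzero
    rw [Submodule.ne_bot_iff]
    refine ⟨A0aux.toPoly (A0aux.ptc L0), ?_, ?_⟩
    · exact A0aux.toPoly_mem_A0
        (hL0len ▸ A0aux.sq_ptc hL0nd (fun x _ => Finset.mem_univ x))
        (hL0len ▸ A0aux.harm_ptc hL0nd (fun x _ => Finset.mem_univ x))
    · intro h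
      have hco := A0aux.coeffI_toPoly (A0aux.ptc L0) (A0aux.fstSet L0)
      rw [h, A0aux.ptc_fstSet hL0nd] at hco
      have : coeffI (0 : MvPolynomial (Fin n) ℂ) (A0aux.fstSet L0) = 0 := by simp [coeffI]
      rw [this] at hco
      exact zero_ne_one hco
  · intro W hW hWinv
    by_cases hbot : W = ⊥
    · exact Or.inl hbot
    · right
      obtain ⟨f, hfW, hf0⟩ := (Submodule.ne_bot_iff W).1 hbot
      obtain ⟨hsq, hharm, htp⟩ := A0aux.A0_forward (hW hfW)
      have hc0 : coeffI f ≠ 0 := fun h => hf0 (by rw [← htp, h, A0aux.toPoly_zero])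
      set Wc := W.comap (A0aux.toPolyL (n := n)) with hWcdef
      have hWcact : ∀ (σ : Equiv.Perm (Fin n)) (d : Finset (Fin n) → ℂ),
          d ∈ Wc → A0aux.cAct σ d ∈ Wc := by
        intro σ d hd
        rw [hWcdef, Submodule.mem_comap]
        have heq : (A0aux.toPolyL (n := n)) (A0aux.cAct σ d)
            = rename σ ((A0aux.toPolyL (n := n)) d) := (A0aux.rename_toPoly σ d).symm
        rw [heq]
        exact hWinv σ _ hd
      have hcWc : coeffI f ∈ Wc := by
        rw [hWcdef, Submodule.mem_comap]
        show A0aux.toPoly (coeffI f) ∈ W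
        rw [htp]
        exact hfW
      have hcspan : coeffI f ∈ A0aux.PTspan Finset.univ k :=
        A0aux.spanning (Finset.univ.card) Finset.univ k (coeffI f) le_rfl hsq hharm
      have hipcc : A0aux.ip (coeffI f) (coeffI f) ≠ 0 := by
        rw [A0aux.ip_self]
        intro h
        exact hc0 (A0aux.ip_self_nonneg_zero (Complex.ofReal_eq_zero.1 h))
      have hgen : ∃ L : List (Fin n × Fin n), L.length = k ∧ (A0aux.lets L).Nodup ∧
          A0aux.ip (coeffI f) (A0aux.ptc L) ≠ 0 := by
        by_contra hno
        push_neg at hno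
        let T : Submodule ℂ (Finset (Fin n) → ℂ) :=
          { carrier := {d | A0aux.ip (coeffI f) d = 0}
            add_mem' := by
              intro x y hx hy
              show A0aux.ip (coeffI f) (x + y) = 0
              rw [A0aux.ip_add_right]
              have hx' : A0aux.ip (coeffI f) x = 0 := hx
              have hy' : A0aux.ip (coeffI f) y = 0 := hy
              rw [hx', hy', add_zero]
            zero_mem' := A0aux.ip_zero_right _
            smul_mem' := by
              intro μ x hx
              show A0aux.ip (coeffI f) (μ • x) = 0
              rw [A0aux.ip_smul_right]
              have hx' : A0aux.ip (coeffI f) x = 0 := hx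
              rw [hx', mul_zero] }
        have hTspan : A0aux.PTspan Finset.univ k ≤ T := by
          apply Submodule.span_le.2
          rintro d ⟨L, hlen, hnd, -, rfl⟩
          exact hno L hlen hnd
        exact hipcc (hTspan hcspan)
      obtain ⟨L, hLlen, hLnd, hLip⟩ := hgen
      have hkmem : A0aux.kapS L (coeffI f) ∈ Wc := A0aux.kapS_mem hWcact L _ hcWc
      obtain ⟨μ, hμ⟩ := A0aux.kapS_eq_smul L hLnd (coeffI f) (by rw [hLlen]; exact hsq)
      have hknz : A0aux.ip (A0aux.kapS L (coeffI f)) (A0aux.ptc L) ≠ 0 := by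
        rw [A0aux.ip_kapS L hLnd, A0aux.kapS_ptc L hLnd, A0aux.ip_smul_right]
        intro h
        rcases mul_eq_zero.1 h with h | h
        · have h2 : ((2:ℂ) ^ L.length) = 0 :=
            (starRingEnd ℂ).injective (h.trans (map_zero (starRingEnd ℂ)).symm)
          exact pow_ne_zero _ two_ne_zero h2
        · exact hLip h
      have hμ0 : μ ≠ 0 := by
        rintro rfl
        rw [hμ, zero_smul] at hknz
        exact hknz (A0aux.ip_zero_left _)
      have hptcW : A0aux.ptc L ∈ Wc := by
        have heq : A0aux.ptc L = μ⁻¹ • A0aux.kapS L (coeffI f) := by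
          rw [hμ, smul_smul, inv_mul_cancel₀ hμ0, one_smul]
        rw [heq]
        exact Wc.smul_mem _ hkmem
      have hle : A0aux.PTspan Finset.univ k ≤ Wc := by
        apply Submodule.span_le.2
        rintro d ⟨M, hMlen, hMnd, -, rfl⟩
        obtain ⟨σ, hσ⟩ := A0aux.exists_perm L M hLnd hMnd (hLlen.trans hMlen.symm)
        rw [← hσ, A0aux.ptc_map]
        exact hWcact σ _ hptcW
      apply le_antisymm hW
      intro g hg
      obtain ⟨hgsq, hgharm, hgtp⟩ := A0aux.A0_forward hg
      have hmem : coeffI g ∈ Wc :=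
        hle (A0aux.spanning Finset.univ.card Finset.univ k _ le_rfl hgsq hgharm)
      rw [hWcdef, Submodule.mem_comap] at hmem
      have hfin : A0aux.toPoly (coeffI g) ∈ W := hmem
      rwa [hgtp] at hfin

end
end

section
/- Let n, k, l be integers with 0 ≤ 2k ≤ n, 0 ≤ 2l ≤ n, and k ≠ l. Then A⁰_{n,k} and A⁰_{n,l} are not isomorphic as modules over the group algebra ℂ[S_n] (the corresponding representations of S_n are inequivalent). -/
open MvPolynomial Finset

noncomputable section

lemma xI_eq_monomial (n : ℕ) (I : Finset (Fin n)) :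
    xI n I = monomial (∑ i ∈ I, Finsupp.single i 1) 1 := by
  unfold xI
  rw [monomial_sum_index]
  simp [X]

lemma idx_inj {n : ℕ} {I I' : Finset (Fin n)}
    (h : (∑ i ∈ I, Finsupp.single i (1:ℕ)) = ∑ i ∈ I', Finsupp.single i 1) : I = I' := by
  have key : ∀ (I : Finset (Fin n)) (j : Fin n),
      (∑ i ∈ I, Finsupp.single i (1:ℕ)) j = if j ∈ I then 1 else 0 := by
    intro I j
    rw [Finsupp.finset_sum_apply]
    simp [Finsupp.single_apply, Finset.sum_ite_eq' I j]
  ext j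
  have : (∑ i ∈ I, Finsupp.single i (1:ℕ)) j = (∑ i ∈ I', Finsupp.single i (1:ℕ)) j := by rw [h]
  rw [key, key] at this
  by_cases h1 : j ∈ I <;> by_cases h2 : j ∈ I' <;> simp_all

lemma coeffI_xI {n : ℕ} (I I' : Finset (Fin n)) :
    coeffI (xI n I') I = if I = I' then 1 else 0 := by
  rw [coeffI, xI_eq_monomial, coeff_monomial]
  by_cases h : I = I'
  · simp [h]
  · rw [if_neg, if_neg h]
    intro hc
    exact h (idx_inj hc.symm)

lemma rename_xI {n : ℕ} (σ : Equiv.Perm (Fin n)) (I : Finset (Fin n)) :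
    rename σ (xI n I) = xI n (I.image σ) := by
  unfold xI
  rw [map_prod, Finset.prod_image (fun a _ b _ h => σ.injective h)]
  simp

lemma coeffI_rename {n : ℕ} (σ : Equiv.Perm (Fin n)) (f : MvPolynomial (Fin n) ℂ)
    (I : Finset (Fin n)) : coeffI (rename σ f) (I.image σ) = coeffI f I := by
  unfold coeffI
  have : (∑ i ∈ I.image σ, Finsupp.single i (1:ℕ))
      = Finsupp.mapDomain σ (∑ i ∈ I, Finsupp.single i 1) := by
    rw [Finsupp.mapDomain_finset_sum]
    rw [Finset.sum_image (fun a _ b _ h => σ.injective h)]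
    simp [Finsupp.mapDomain_single]
  rw [this, coeff_rename_mapDomain _ σ.injective]

lemma coeffI_rename' {n : ℕ} (σ : Equiv.Perm (Fin n)) (f : MvPolynomial (Fin n) ℂ)
    (I : Finset (Fin n)) : coeffI (rename σ f) I = coeffI f (I.image σ.symm) := by
  have := coeffI_rename σ f (I.image σ.symm)
  rwa [Finset.image_image, show (⇑σ ∘ ⇑σ.symm) = id from funext (σ.apply_symm_apply),
    Finset.image_id] at this

lemma coeffI_sum {n : ℕ} {α : Type*} (s : Finset α) (g : α → MvPolynomial (Fin n) ℂ)
    (I : Finset (Fin n)) : coeffI (∑ a ∈ s, g a) I = ∑ a ∈ s, coeffI (g a) I := by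
  unfold coeffI; exact coeff_sum _ _ _

lemma coeffI_smul {n : ℕ} (c : ℂ) (f : MvPolynomial (Fin n) ℂ) (I : Finset (Fin n)) :
    coeffI (c • f) I = c * coeffI f I := by
  unfold coeffI; rw [coeff_smul]; rfl

lemma Aspace_expand {n k : ℕ} {f : MvPolynomial (Fin n) ℂ} (hf : f ∈ Aspace n k) :
    f = ∑ I ∈ Finset.univ.powersetCard k, coeffI f I • xI n I := by
  induction hf using Submodule.span_induction with
  | mem g hg =>
    obtain ⟨I0, hI0, rfl⟩ := hg
    rw [Finset.sum_congr rfl (fun I _ => by rw [coeffI_xI])]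
    rw [Finset.sum_congr rfl (fun I _ => by
        split_ifs with h <;> simp [h] : ∀ I ∈ powersetCard k univ,
        (if I = I0 then (1:ℂ) else 0) • xI n I = if I = I0 then xI n I0 else 0),
      Finset.sum_ite_eq' (powersetCard k univ) I0 (fun _ => xI n I0),
      if_pos (by simpa [Finset.mem_powersetCard_univ] using hI0)]
  | zero => simp [coeffI]
  | add g h _ _ ihg ihh =>
    nth_rewrite 1 [ihg, ihh]
    rw [← Finset.sum_add_distrib]
    exact Finset.sum_congr rfl fun I _ => by
      rw [show coeffI (g+h) I = coeffI g I + coeffI h I from coeff_add .., add_smul]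
  | smul c g _ ihg =>
    nth_rewrite 1 [ihg]
    rw [Finset.smul_sum]
    exact Finset.sum_congr rfl fun I _ => by rw [coeffI_smul, mul_smul]

lemma image_swap_of_both {n : ℕ} {I : Finset (Fin n)} {i j : Fin n}
    (h : (i ∈ I ↔ j ∈ I)) : I.image (Equiv.swap i j) = I := by
  ext a
  simp only [Finset.mem_image]
  constructor
  · rintro ⟨b, hb, rfl⟩
    rw [Equiv.swap_apply_def]
    split_ifs with h1 h2 <;> simp_all
  · intro ha
    refine ⟨Equiv.swap i j a, ?_, Equiv.swap_apply_self i j a⟩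
    rw [Equiv.swap_apply_def]
    split_ifs with h1 h2 <;> simp_all

lemma image_swap_of_mem {n : ℕ} {I : Finset (Fin n)} {i j : Fin n}
    (hi : i ∈ I) (hj : j ∉ I) : I.image (Equiv.swap i j) = insert j (I.erase i) := by
  ext a
  simp only [Finset.mem_image, Finset.mem_insert, Finset.mem_erase]
  constructor
  · rintro ⟨b, hb, rfl⟩
    rcases eq_or_ne b i with rfl | hbi
    · simp
    · rcases eq_or_ne b j with rfl | hbj
      · exact absurd hb hj
      · rw [Equiv.swap_apply_of_ne_of_ne hbi hbj]; exact Or.inr ⟨hbi, hb⟩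
  · rintro (rfl | ⟨hai, haI⟩)
    · exact ⟨i, hi, Equiv.swap_apply_left i a⟩
    · refine ⟨a, haI, Equiv.swap_apply_of_ne_of_ne hai (fun h => hj (h ▸ haI))⟩

lemma classsum_xI {n k : ℕ} {I : Finset (Fin n)} (hI : I.card = k) :
    ∑ p ∈ (univ : Finset (Fin n)).offDiag, rename (Equiv.swap p.1 p.2) (xI n I)
      + n • xI n I
    = (k*k + (n-k)*(n-k)) • xI n I
      + 2 • ∑ q ∈ I ×ˢ Iᶜ, xI n (insert q.2 (I.erase q.1)) := by
  have hdiag : ∑ p ∈ (univ : Finset (Fin n)).diag, rename (Equiv.swap p.1 p.2) (xI n I)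
      = n • xI n I := by
    rw [Finset.sum_diag]
    have : ∀ i : Fin n, rename (⇑(Equiv.swap i i)) (xI n I) = xI n I := by
      intro i; rw [Equiv.swap_self]
      show rename (⇑(Equiv.refl (Fin n))) (xI n I) = xI n I
      simp [rename_id]
    rw [Finset.sum_congr rfl (fun i _ => this i), Finset.sum_const, Finset.card_univ,
      Fintype.card_fin]
  have hsplit : ∑ p ∈ ((univ : Finset (Fin n)) ×ˢ univ), rename (Equiv.swap p.1 p.2) (xI n I)
      = ∑ p ∈ (univ : Finset (Fin n)).offDiag, rename (Equiv.swap p.1 p.2) (xI n I)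
        + n • xI n I := by
    rw [← Finset.diag_union_offDiag (univ : Finset (Fin n)),
      Finset.sum_union (Finset.disjoint_diag_offDiag _), hdiag, add_comm]
  rw [← hsplit]
  -- expand product sum
  rw [Finset.sum_product]
  have swap_eval : ∀ i j : Fin n, rename (⇑(Equiv.swap i j)) (xI n I)
      = xI n (I.image (Equiv.swap i j)) := fun i j => rename_xI _ I
  calc ∑ i : Fin n, ∑ j : Fin n, rename (⇑(Equiv.swap i j)) (xI n I)
      = ∑ i ∈ I, ∑ j : Fin n, rename (⇑(Equiv.swap i j)) (xI n I)
        + ∑ i ∈ Iᶜ, ∑ j : Fin n, rename (⇑(Equiv.swap i j)) (xI n I) := by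
        rw [Finset.sum_add_sum_compl]
    _ = (∑ i ∈ I, (∑ j ∈ I, rename (⇑(Equiv.swap i j)) (xI n I)
          + ∑ j ∈ Iᶜ, rename (⇑(Equiv.swap i j)) (xI n I)))
        + ∑ i ∈ Iᶜ, (∑ j ∈ I, rename (⇑(Equiv.swap i j)) (xI n I)
          + ∑ j ∈ Iᶜ, rename (⇑(Equiv.swap i j)) (xI n I)) := by
        simp_rw [Finset.sum_add_sum_compl]
    _ = (k*k + (n-k)*(n-k)) • xI n I
      + 2 • ∑ q ∈ I ×ˢ Iᶜ, xI n (insert q.2 (I.erase q.1)) := by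
        rw [Finset.sum_add_distrib, Finset.sum_add_distrib]
        have h1 : ∑ i ∈ I, ∑ j ∈ I, rename (⇑(Equiv.swap i j)) (xI n I) = (k*k) • xI n I := by
          rw [Finset.sum_congr rfl (fun i hi => Finset.sum_congr rfl (fun j hj => by
            rw [swap_eval, image_swap_of_both (iff_of_true hi hj)]))]
          simp [Finset.sum_const, hI, mul_smul]
        have h2 : ∑ i ∈ Iᶜ, ∑ j ∈ Iᶜ, rename (⇑(Equiv.swap i j)) (xI n I)
            = ((n-k)*(n-k)) • xI n I := by
          rw [Finset.sum_congr rfl (fun i hi => Finset.sum_congr rfl (fun j hj => by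
            rw [swap_eval, image_swap_of_both
              (iff_of_false (Finset.mem_compl.mp hi) (Finset.mem_compl.mp hj))]))]
          simp [Finset.sum_const, Finset.card_compl, hI, mul_smul]
        have h3 : ∑ i ∈ I, ∑ j ∈ Iᶜ, rename (⇑(Equiv.swap i j)) (xI n I)
            = ∑ q ∈ I ×ˢ Iᶜ, xI n (insert q.2 (I.erase q.1)) := by
          rw [Finset.sum_product]
          exact Finset.sum_congr rfl (fun i hi => Finset.sum_congr rfl (fun j hj => by
            rw [swap_eval, image_swap_of_mem hi (Finset.mem_compl.mp hj)]))
        have h4 : ∑ i ∈ Iᶜ, ∑ j ∈ I, rename (⇑(Equiv.swap i j)) (xI n I)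
            = ∑ q ∈ I ×ˢ Iᶜ, xI n (insert q.2 (I.erase q.1)) := by
          rw [Finset.sum_comm]
          rw [← h3]
          exact Finset.sum_congr rfl (fun j hj => Finset.sum_congr rfl (fun i hi => by
            rw [Equiv.swap_comm]))
        rw [h1, h2, h3, h4]
        module

lemma key_swap_sum {n k : ℕ} (c : Finset (Fin n) → ℂ) :
    ∑ x ∈ (univ.powersetCard k ×ˢ ((univ : Finset (Fin n)) ×ˢ univ)),
      (if x.2.1 ∈ x.1 ∧ x.2.2 ∉ x.1 then c x.1 • xI n (insert x.2.2 (x.1.erase x.2.1)) else 0)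
    = ∑ x ∈ (univ.powersetCard k ×ˢ ((univ : Finset (Fin n)) ×ˢ univ)),
      (if x.2.1 ∈ x.1 ∧ x.2.2 ∉ x.1 then c (insert x.2.2 (x.1.erase x.2.1)) • xI n x.1 else 0) := by
  set e : (Finset (Fin n)) × Fin n × Fin n → (Finset (Fin n)) × Fin n × Fin n :=
    fun x => if x.2.1 ∈ x.1 ∧ x.2.2 ∉ x.1
      then (insert x.2.2 (x.1.erase x.2.1), x.2.2, x.2.1) else x with he
  have step : ∀ x ∈ (univ.powersetCard k ×ˢ ((univ : Finset (Fin n)) ×ˢ univ)),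
      e x ∈ (univ.powersetCard k ×ˢ ((univ : Finset (Fin n)) ×ˢ univ)) ∧
      e (e x) = x ∧
      (if x.2.1 ∈ x.1 ∧ x.2.2 ∉ x.1 then c x.1 • xI n (insert x.2.2 (x.1.erase x.2.1)) else 0)
        = (if (e x).2.1 ∈ (e x).1 ∧ (e x).2.2 ∉ (e x).1
            then c (insert (e x).2.2 ((e x).1.erase (e x).2.1)) • xI n (e x).1 else 0) := by
    rintro ⟨I, a, b⟩ hx
    simp only [Finset.mem_product, Finset.mem_powersetCard_univ, Finset.mem_univ,
      and_true] at hx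
    by_cases hcond : a ∈ I ∧ b ∉ I
    · obtain ⟨ha, hb⟩ := hcond
      have hab : a ≠ b := fun h => hb (h ▸ ha)
      have hbe : b ∉ I.erase a := fun h => hb (Finset.mem_of_mem_erase h)
      have hex : e (I, a, b) = (insert b (I.erase a), b, a) := by
        rw [he]; simp only [ha, hb, not_false_iff, and_self, if_pos]
      have hbI' : b ∈ insert b (I.erase a) := Finset.mem_insert_self _ _
      have haI' : a ∉ insert b (I.erase a) := by
        simp [Finset.mem_insert, hab, Finset.mem_erase]
      have herase : (insert b (I.erase a)).erase b = I.erase a :=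
        Finset.erase_insert hbe
      have hins : insert a (I.erase a) = I := Finset.insert_erase ha
      have hcard : (insert b (I.erase a)).card = k := by
        rw [Finset.card_insert_of_notMem hbe, Finset.card_erase_of_mem ha, hx]
        have : 1 ≤ k := hx ▸ Finset.card_pos.mpr ⟨a, ha⟩
        omega
      refine ⟨?_, ?_, ?_⟩
      · rw [hex]
        simp [Finset.mem_product, Finset.mem_powersetCard_univ, hcard]
      · rw [hex, he]
        simp only [hbI', haI', not_false_iff, and_self, if_pos]
        rw [herase, hins]
      · rw [hex]
        simp only [ha, hb, hbI', haI', not_false_iff, and_self, if_pos]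
        rw [herase, hins]
    · have hex : e (I, a, b) = (I, a, b) := by rw [he]; simp only [hcond, if_neg, ite_eq_right_iff]; simp [hcond]
      refine ⟨?_, by rw [hex, hex], ?_⟩
      · rw [hex]
        simp [Finset.mem_product, Finset.mem_powersetCard_univ, hx]
      · rw [hex]
        simp [hcond]
  refine Finset.sum_nbij' e e ?_ ?_ ?_ ?_ ?_
  · exact fun x hx => (step x hx).1
  · exact fun x hx => (step x hx).1
  · exact fun x hx => (step x hx).2.1
  · exact fun x hx => (step x hx).2.1
  · exact fun x hx => (step x hx).2.2

lemma classsum_mem {n k : ℕ} {f : MvPolynomial (Fin n) ℂ} (hfA : f ∈ Aspace n k)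
    (hcond : ∀ J : Finset (Fin n), J.card = k - 1 →
      ∑ j ∈ Jᶜ, coeffI f (insert j J) = 0) :
    ∑ p ∈ (univ : Finset (Fin n)).offDiag, rename (Equiv.swap p.1 p.2) f
    = (((k*k + (n-k)*(n-k) : ℕ) : ℂ) - n - 2*k) • f := by
  set c : Finset (Fin n) → ℂ := coeffI f with hc
  -- inner cancellation from the A⁰ condition
  have inner : ∀ I : Finset (Fin n), I.card = k → ∀ a ∈ I,
      ∑ b ∈ Iᶜ, c (insert b (I.erase a)) = - c I := by
    intro I hI a ha
    have hJ : (I.erase a).card = k - 1 := by rw [Finset.card_erase_of_mem ha, hI]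
    have h0 := hcond (I.erase a) hJ
    rw [Finset.compl_erase, Finset.sum_insert (by simp [ha])] at h0
    rw [Finset.insert_erase ha] at h0
    linear_combination h0
  -- filter description of I ×ˢ Iᶜ
  have hfilter : ∀ I : Finset (Fin n),
      I ×ˢ Iᶜ = (((univ : Finset (Fin n)) ×ˢ univ)).filter
        (fun q => q.1 ∈ I ∧ q.2 ∉ I) := by
    intro I; ext q
    simp [Finset.mem_product, Finset.mem_filter, Finset.mem_compl]
  have key : ∑ I ∈ univ.powersetCard k, c I • ∑ q ∈ I ×ˢ Iᶜ, xI n (insert q.2 (I.erase q.1))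
      = (-(k:ℂ)) • f := by
    have lhs_eq : ∑ I ∈ univ.powersetCard k, c I • ∑ q ∈ I ×ˢ Iᶜ, xI n (insert q.2 (I.erase q.1))
        = ∑ x ∈ (univ.powersetCard k ×ˢ ((univ : Finset (Fin n)) ×ˢ univ)),
          (if x.2.1 ∈ x.1 ∧ x.2.2 ∉ x.1 then c x.1 • xI n (insert x.2.2 (x.1.erase x.2.1)) else 0) := by
      rw [Finset.sum_product]
      refine Finset.sum_congr rfl fun I _ => ?_
      rw [Finset.smul_sum, hfilter I, Finset.sum_filter]
    rw [lhs_eq, key_swap_sum, Finset.sum_product]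
    have rhs_eq : ∀ I ∈ univ.powersetCard k,
        (∑ q ∈ ((univ : Finset (Fin n)) ×ˢ univ),
          (if q.1 ∈ I ∧ q.2 ∉ I then c (insert q.2 (I.erase q.1)) • xI n I else 0))
        = ((-(k:ℂ)) * c I) • xI n I := by
      intro I hI
      rw [Finset.mem_powersetCard_univ] at hI
      rw [← Finset.sum_filter, ← hfilter I, Finset.sum_product]
      have hstep : ∀ a ∈ I, ∑ b ∈ Iᶜ, c (insert b (I.erase a)) • xI n I
          = (- c I) • xI n I := by
        intro a ha
        rw [← Finset.sum_smul, inner I hI a ha]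
      rw [Finset.sum_congr rfl hstep, Finset.sum_const, hI]
      rw [← Nat.cast_smul_eq_nsmul ℂ, smul_smul]
      ring_nf
    rw [Finset.sum_congr rfl rhs_eq]
    conv_rhs => rw [Aspace_expand hfA]
    rw [Finset.smul_sum]
    refine Finset.sum_congr rfl fun I _ => by rw [smul_smul, hc]
  -- expand LHS over the basis
  have expand : ∑ p ∈ (univ : Finset (Fin n)).offDiag, rename (Equiv.swap p.1 p.2) f
      = ∑ I ∈ univ.powersetCard k, c I •
          ∑ p ∈ (univ : Finset (Fin n)).offDiag, rename (Equiv.swap p.1 p.2) (xI n I) := by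
    conv_lhs => rw [Aspace_expand hfA]
    have hpush : ∀ p ∈ (univ : Finset (Fin n)).offDiag,
        rename (Equiv.swap p.1 p.2) (∑ I ∈ univ.powersetCard k, coeffI f I • xI n I)
        = ∑ I ∈ univ.powersetCard k, c I • rename (Equiv.swap p.1 p.2) (xI n I) := by
      intro p _
      rw [map_sum]
      exact Finset.sum_congr rfl fun I _ => by rw [← hc, map_smul]
    rw [Finset.sum_congr rfl hpush, Finset.sum_comm]
    exact Finset.sum_congr rfl fun I _ => (Finset.smul_sum).symm
  rw [expand]
  have hxI : ∀ I ∈ univ.powersetCard k,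
      c I • ∑ p ∈ (univ : Finset (Fin n)).offDiag, rename (Equiv.swap p.1 p.2) (xI n I)
      = (k*k + (n-k)*(n-k)) • (c I • xI n I)
        + 2 • (c I • ∑ q ∈ I ×ˢ Iᶜ, xI n (insert q.2 (I.erase q.1)))
        - n • (c I • xI n I) := by
    intro I hI
    rw [Finset.mem_powersetCard_univ] at hI
    have h := classsum_xI hI
    have h2 : ∑ p ∈ (univ : Finset (Fin n)).offDiag, rename (Equiv.swap p.1 p.2) (xI n I)
        = (k*k + (n-k)*(n-k)) • xI n I
          + 2 • ∑ q ∈ I ×ˢ Iᶜ, xI n (insert q.2 (I.erase q.1)) - n • xI n I :=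
      eq_sub_of_add_eq h
    rw [h2, smul_sub, smul_add, smul_comm (c I), smul_comm (c I), smul_comm (c I)]
  rw [Finset.sum_congr rfl hxI, Finset.sum_sub_distrib, Finset.sum_add_distrib,
    ← Finset.smul_sum, ← Finset.smul_sum, ← Finset.smul_sum, key, ← Aspace_expand hfA]
  rw [← Nat.cast_smul_eq_nsmul ℂ (k*k + (n-k)*(n-k)) f, ← Nat.cast_smul_eq_nsmul ℂ n f]
  module

lemma Aspace_rename {n k : ℕ} {f : MvPolynomial (Fin n) ℂ} (hf : f ∈ Aspace n k)
    (σ : Equiv.Perm (Fin n)) : rename σ f ∈ Aspace n k := by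
  induction hf using Submodule.span_induction with
  | mem g hg =>
    obtain ⟨I, hI, rfl⟩ := hg
    rw [rename_xI]
    exact Submodule.subset_span ⟨I.image σ, by
      rw [Finset.card_image_of_injective _ σ.injective, hI], rfl⟩
  | zero => rw [map_zero]; exact Submodule.zero_mem _
  | add g h _ _ ihg ihh => rw [map_add]; exact Submodule.add_mem _ ihg ihh
  | smul c g _ ihg => rw [map_smul]; exact Submodule.smul_mem _ c ihg

lemma cond_rename {n k : ℕ} {f : MvPolynomial (Fin n) ℂ}
    (hcond : ∀ J : Finset (Fin n), J.card = k - 1 →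
      ∑ j ∈ Jᶜ, coeffI f (insert j J) = 0) (σ : Equiv.Perm (Fin n)) :
    ∀ J : Finset (Fin n), J.card = k - 1 →
      ∑ j ∈ Jᶜ, coeffI (rename σ f) (insert j J) = 0 := by
  intro J hJ
  have step : ∀ j ∈ Jᶜ, coeffI (rename σ f) (insert j J)
      = coeffI f (insert (σ.symm j) (J.image σ.symm)) := by
    intro j _
    rw [coeffI_rename', Finset.image_insert]
  rw [Finset.sum_congr rfl step]
  have hbij : ∑ j ∈ Jᶜ, coeffI f (insert (σ.symm j) (J.image σ.symm))
      = ∑ j' ∈ (J.image σ.symm)ᶜ, coeffI f (insert j' (J.image σ.symm)) := by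
    refine Finset.sum_nbij' (fun j => σ.symm j) (fun j' => σ j') ?_ ?_ ?_ ?_ ?_
    · intro a ha
      simp only [Finset.mem_compl] at ha ⊢
      intro hmem
      rw [Finset.mem_image] at hmem
      obtain ⟨b, hb, hba⟩ := hmem
      exact ha ((σ.symm.injective hba) ▸ hb)
    · intro a ha
      simp only [Finset.mem_compl] at ha ⊢
      intro hmem
      exact ha (by simpa using Finset.mem_image_of_mem σ.symm hmem)
    · intro a _; simp
    · intro a _; simp
    · intro a _; rfl
  rw [hbij]
  exact hcond _ (by rw [Finset.card_image_of_injective _ σ.symm.injective, hJ])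

lemma coeffI_zero {n : ℕ} (I : Finset (Fin n)) : coeffI (0 : MvPolynomial (Fin n) ℂ) I = 0 := by
  simp [coeffI]

lemma A0_nonzero (n k : ℕ) (hk : 2 * k ≤ n) (hn : 0 < n) (hk0 : 0 < k) :
    ∃ f : MvPolynomial (Fin n) ℂ, f ∈ Aspace n k ∧
      (∀ J : Finset (Fin n), J.card = k - 1 → ∑ j ∈ Jᶜ, coeffI f (insert j J) = 0) ∧
      f ≠ 0 := by
  classical
  set av : Fin k → Fin n := fun i => ⟨2*i, by omega⟩ with hav
  set bv : Fin k → Fin n := fun i => ⟨2*i+1, by omega⟩ with hbv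
  have hav_inj : Function.Injective av := by
    intro i j h; rw [hav] at h; simp only [Fin.mk.injEq] at h; exact Fin.ext (by omega)
  have hbv_inj : Function.Injective bv := by
    intro i j h; rw [hbv] at h; simp only [Fin.mk.injEq] at h; exact Fin.ext (by omega)
  have hav_par : ∀ i, ((av i : Fin n) : ℕ) % 2 = 0 := fun i => by simp [hav, Nat.mul_mod_right]
  have hbv_par : ∀ i, ((bv i : Fin n) : ℕ) % 2 = 1 := fun i => by
    simp [hbv]
  set idx : Fin n → Fin k := fun j => ⟨((j:ℕ)/2) % k, Nat.mod_lt _ hk0⟩ with hidx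
  have hidx_av : ∀ i, idx (av i) = i := by
    intro i; rw [hidx, hav]
    refine Fin.ext ?_
    show (2*(i:ℕ))/2 % k = i
    have h2 : (2*(i:ℕ))/2 = i := by omega
    rw [h2, Nat.mod_eq_of_lt i.isLt]
  have hidx_bv : ∀ i, idx (bv i) = i := by
    intro i; rw [hidx, hbv]
    refine Fin.ext ?_
    show (2*(i:ℕ)+1)/2 % k = i
    have h2 : (2*(i:ℕ)+1)/2 = i := by omega
    rw [h2, Nat.mod_eq_of_lt i.isLt]
  set It : Finset (Fin k) → Finset (Fin n) := fun t => t.image av ∪ tᶜ.image bv with hIt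
  set wt : Finset (Fin k) → ℂ := fun t => (-1 : ℂ)^(tᶜ.card) with hwt
  set f₀ : MvPolynomial (Fin n) ℂ := ∑ t : Finset (Fin k), wt t • xI n (It t) with hf₀
  have hdisj : ∀ t u : Finset (Fin k), Disjoint (t.image av) (u.image bv) := by
    intro t u
    rw [Finset.disjoint_left]
    intro x hx hx'
    rw [Finset.mem_image] at hx hx'
    obtain ⟨i, _, rfl⟩ := hx
    obtain ⟨i', _, h⟩ := hx'
    have := hbv_par i'
    rw [h] at this
    rw [hav_par i] at this
    omega
  have hav_notmem : ∀ (i : Fin k) (u : Finset (Fin k)), av i ∉ u.image bv := by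
    intro i u h
    rw [Finset.mem_image] at h
    obtain ⟨i', _, h⟩ := h
    have := hbv_par i'; rw [h, hav_par i] at this; omega
  have hbv_notmem : ∀ (i : Fin k) (u : Finset (Fin k)), bv i ∉ u.image av := by
    intro i u h
    rw [Finset.mem_image] at h
    obtain ⟨i', _, h⟩ := h
    have := hav_par i'; rw [h, hbv_par i] at this; omega
  have hIt_card : ∀ t : Finset (Fin k), (It t).card = k := by
    intro t
    rw [hIt]
    rw [Finset.card_union_of_disjoint (hdisj t tᶜ),
      Finset.card_image_of_injective _ hav_inj, Finset.card_image_of_injective _ hbv_inj,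
      Finset.card_add_card_compl, Fintype.card_fin]
  have hmemA : f₀ ∈ Aspace n k := by
    refine Submodule.sum_mem _ fun t _ => Submodule.smul_mem _ _ ?_
    exact Submodule.subset_span ⟨It t, hIt_card t, rfl⟩
  have hcoeff : ∀ I : Finset (Fin n), coeffI f₀ I
      = ∑ t : Finset (Fin k), wt t * (if I = It t then 1 else 0) := by
    intro I
    rw [hf₀, coeffI_sum]
    exact Finset.sum_congr rfl fun t _ => by rw [coeffI_smul, coeffI_xI]
  have hcase : ∀ {J : Finset (Fin n)} {j : Fin n} {t : Finset (Fin k)}, j ∉ J →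
      insert j J = It t →
      (∃ i, i ∈ t ∧ j = av i ∧ bv i ∉ J ∧ insert (bv i) J = It (t.erase i)
        ∧ wt (t.erase i) = -wt t) ∨
      (∃ i, i ∉ t ∧ j = bv i ∧ av i ∉ J ∧ insert (av i) J = It (insert i t)
        ∧ wt (insert i t) = -wt t) := by
    intro J j t hjJ hins
    have hjmem : j ∈ It t := hins ▸ Finset.mem_insert_self j J
    have hJe : J = (It t).erase j := by rw [← hins, Finset.erase_insert hjJ]
    rw [hIt, Finset.mem_union] at hjmem
    rcases hjmem with hA | hB
    · rw [Finset.mem_image] at hA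
      obtain ⟨i, hi, rfl⟩ := hA
      left
      have hbvJ : bv i ∉ J := by
        intro hmem
        have : bv i ∈ It t := hins ▸ Finset.mem_insert_of_mem hmem
        rw [hIt, Finset.mem_union] at this
        rcases this with h | h
        · exact hbv_notmem i t h
        · rw [Finset.mem_image] at h
          obtain ⟨i', hi', heq⟩ := h
          rw [hbv_inj heq] at hi'
          exact (Finset.mem_compl.mp hi') hi
      refine ⟨i, hi, rfl, hbvJ, ?_, ?_⟩
      · rw [hJe]
        simp only [hIt]
        rw [Finset.image_erase hav_inj, Finset.compl_erase, Finset.image_insert,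
          Finset.union_insert, Finset.erase_union_distrib,
          Finset.erase_eq_of_notMem (hav_notmem i tᶜ)]
      · simp only [hwt]
        rw [Finset.compl_erase, Finset.card_insert_of_notMem (by simp [hi]), pow_succ]
        ring
    · rw [Finset.mem_image] at hB
      obtain ⟨i, hi, rfl⟩ := hB
      right
      have hit : i ∉ t := Finset.mem_compl.mp hi
      have havJ : av i ∉ J := by
        intro hmem
        have : av i ∈ It t := hins ▸ Finset.mem_insert_of_mem hmem
        rw [hIt, Finset.mem_union] at this
        rcases this with h | h
        · rw [Finset.mem_image] at h
          obtain ⟨i', hi', heq⟩ := h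
          rw [hav_inj heq] at hi'
          exact hit hi'
        · exact hav_notmem i tᶜ h
      refine ⟨i, hit, rfl, havJ, ?_, ?_⟩
      · rw [hJe]
        simp only [hIt]
        rw [Finset.image_insert, Finset.compl_insert, Finset.image_erase hbv_inj,
          Finset.insert_union, Finset.erase_union_distrib,
          Finset.erase_eq_of_notMem (hbv_notmem i t)]
      · simp only [hwt]
        rw [Finset.compl_insert]
        have hcc : tᶜ.card = (tᶜ.erase i).card + 1 := (Finset.card_erase_add_one hi).symm
        rw [hcc, pow_succ]
        ring
  refine ⟨f₀, hmemA, ?_, ?_⟩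
  · -- the A⁰ condition, by a sign-reversing involution
    intro J hJ
    have hrw : ∀ j ∈ Jᶜ, coeffI f₀ (insert j J)
        = ∑ t : Finset (Fin k), wt t * (if insert j J = It t then 1 else 0) :=
      fun j _ => hcoeff _
    rw [Finset.sum_congr rfl hrw, ← Finset.sum_product']
    set F : Fin n × Finset (Fin k) → ℂ :=
      fun p => wt p.2 * (if insert p.1 J = It p.2 then 1 else 0) with hF
    show ∑ p ∈ Jᶜ ×ˢ (univ : Finset (Finset (Fin k))), F p = 0
    set g : Fin n × Finset (Fin k) → Fin n × Finset (Fin k) := fun p =>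
      if insert p.1 J = It p.2 then
        (if (p.1 : ℕ) % 2 = 0 then (bv (idx p.1), p.2.erase (idx p.1))
          else (av (idx p.1), insert (idx p.1) p.2))
      else p with hg
    have main : ∀ p ∈ Jᶜ ×ˢ (univ : Finset (Finset (Fin k))),
        (F p + F (g p) = 0) ∧ (F p ≠ 0 → g p ≠ p) ∧
        g p ∈ Jᶜ ×ˢ (univ : Finset (Finset (Fin k))) ∧ g (g p) = p := by
      rintro ⟨j, t⟩ hp
      rw [Finset.mem_product, Finset.mem_compl] at hp
      obtain ⟨hjJ, -⟩ := hp
      by_cases hind : insert j J = It t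
      · rcases hcase hjJ hind with ⟨i, hi, rfl, h1, h2, h3⟩ | ⟨i, hi, rfl, h1, h2, h3⟩
        · have hg1 : g (av i, t) = (bv i, t.erase i) := by
            rw [hg]; simp only [hind, if_pos, hav_par i, if_pos, hidx_av]
          have hg2 : g (bv i, t.erase i) = (av i, t) := by
            rw [hg]
            simp only [h2.symm, if_pos, hbv_par i, hidx_bv]
            norm_num
            rw [Finset.insert_erase hi]
          refine ⟨?_, ?_, ?_, ?_⟩
          · rw [hg1, hF]
            simp only [hind, if_pos, h2.symm, h3]
            ring
          · intro _
            rw [hg1]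
            intro hcontra
            have := congrArg Prod.fst hcontra
            simp only at this
            have h5 := hbv_par i; rw [this, hav_par i] at h5; omega
          · rw [hg1, Finset.mem_product, Finset.mem_compl]
            exact ⟨h1, Finset.mem_univ _⟩
          · rw [hg1, hg2]
        · have hg1 : g (bv i, t) = (av i, insert i t) := by
            rw [hg]; simp only [hind, if_pos, hbv_par i, hidx_bv]
            norm_num
          have hg2 : g (av i, insert i t) = (bv i, t) := by
            rw [hg]
            simp only [h2.symm, if_pos, hav_par i, hidx_av]
            norm_num
            first
            | rfl
            | exact hi
            | rw [Finset.erase_insert hi]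
          refine ⟨?_, ?_, ?_, ?_⟩
          · rw [hg1, hF]
            simp only [hind, if_pos, h2.symm, h3]
            ring
          · intro _
            rw [hg1]
            intro hcontra
            have := congrArg Prod.fst hcontra
            simp only at this
            have h5 := hbv_par i; rw [← this, hav_par i] at h5; omega
          · rw [hg1, Finset.mem_product, Finset.mem_compl]
            exact ⟨h1, Finset.mem_univ _⟩
          · rw [hg1, hg2]
      · have hFp : F (j, t) = 0 := by rw [hF]; simp [hind]
        have hgp : g (j, t) = (j, t) := by rw [hg]; simp [hind]
        refine ⟨by rw [hgp, hFp]; ring, fun h => absurd hFp h, ?_, by rw [hgp, hgp]⟩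
        rw [hgp, Finset.mem_product, Finset.mem_compl]
        exact ⟨hjJ, Finset.mem_univ _⟩
    exact Finset.sum_involution (fun p _ => g p)
      (fun p hp => (main p hp).1)
      (fun p hp => (main p hp).2.1)
      (fun p hp => (main p hp).2.2.1)
      (fun p hp => (main p hp).2.2.2)
  · -- f₀ ≠ 0
    intro hzero
    have h1 : coeffI f₀ (It Finset.univ) = 1 := by
      rw [hcoeff]
      rw [Finset.sum_eq_single Finset.univ]
      · rw [hwt]; simp
      · intro t _ ht
        rw [mul_ite, mul_one, mul_zero, if_neg]
        intro hconra
        obtain ⟨i, hit⟩ : ∃ i, i ∉ t := by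
          by_contra hall
          push_neg at hall
          exact ht (Finset.eq_univ_iff_forall.mpr hall)
        have : bv i ∈ It t := by
          rw [hIt, Finset.mem_union]
          exact Or.inr (Finset.mem_image_of_mem _ (Finset.mem_compl.mpr hit))
        rw [← hconra, hIt] at this
        rw [Finset.mem_union] at this
        rcases this with h | h
        · exact hbv_notmem i Finset.univ h
        · simp at h
      · intro h
        exact absurd (Finset.mem_univ _) h
    rw [hzero, coeffI_zero] at h1
    exact one_ne_zero h1.symm

lemma nat_ineq {n k l a b : ℕ} (ha : k + a = n) (hb : l + b = n) (hl : 2*l ≤ n)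
    (hkl : k < l) : l*l + b*b + 2*k < k*k + a*a + 2*l := by
  nlinarith [Nat.sub_le n l, sq_nonneg (a - b), sq_nonneg (a + b)]

lemma scalar_ne {n k l : ℕ} (hk : 2*k ≤ n) (hl : 2*l ≤ n) (hkl : k ≠ l) :
    (((k*k + (n-k)*(n-k) : ℕ) : ℂ) - n - 2*k) ≠ (((l*l + (n-l)*(n-l) : ℕ) : ℂ) - n - 2*l) := by
  intro h
  have hcast : ((k*k + (n-k)*(n-k) + 2*l : ℕ) : ℂ) = ((l*l + (n-l)*(n-l) + 2*k : ℕ) : ℂ) := by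
    push_cast at h ⊢
    linear_combination h
  have hnat : k*k + (n-k)*(n-k) + 2*l = l*l + (n-l)*(n-l) + 2*k := Nat.cast_injective hcast
  rcases Nat.lt_or_ge k l with hlt | hge
  · have := nat_ineq (Nat.add_sub_cancel' (by omega) : k + (n-k) = n)
      (Nat.add_sub_cancel' (by omega) : l + (n-l) = n) hl hlt
    omega
  · have hlt : l < k := by omega
    have := nat_ineq (Nat.add_sub_cancel' (by omega) : l + (n-l) = n)
      (Nat.add_sub_cancel' (by omega) : k + (n-k) = n) hk hlt
    omega

lemma idx_apply {n : ℕ} (I : Finset (Fin n)) (j : Fin n) :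
    (∑ i ∈ I, Finsupp.single i (1:ℕ)) j = if j ∈ I then 1 else 0 := by
  rw [Finsupp.finset_sum_apply]
  simp [Finsupp.single_apply, Finset.sum_ite_eq' I j]

lemma one_satisfies (n : ℕ) :
    (1 : MvPolynomial (Fin n) ℂ) ∈ Aspace n 0 ∧
    (∀ J : Finset (Fin n), J.card = 0 - 1 → ∑ j ∈ Jᶜ, coeffI 1 (insert j J) = 0) := by
  constructor
  · exact Submodule.subset_span ⟨∅, Finset.card_empty, by rw [xI, Finset.prod_empty]⟩
  · intro J hJ
    refine Finset.sum_eq_zero fun j hj => ?_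
    rw [coeffI, coeff_one, if_neg]
    intro h0
    have := DFunLike.congr_fun h0 j
    rw [idx_apply] at this
    simp [Finset.mem_insert_self] at this

theorem A0_inequivalent' (n k l : ℕ) (hk : 2 * k ≤ n) (hl : 2 * l ≤ n) (hkl : k ≠ l) :
    ¬ ∃ e : A0space n k ≃ₗ[ℂ] A0space n l,
      ∀ (σ : Equiv.Perm (Fin n)) (f g : A0space n k),
        (g : MvPolynomial (Fin n) ℂ) = rename σ (f : MvPolynomial (Fin n) ℂ) →
        (e g : MvPolynomial (Fin n) ℂ) = rename σ (e f : MvPolynomial (Fin n) ℂ) := by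
  rintro ⟨e, he⟩
  -- a nonzero element of A⁰_{n,k}
  obtain ⟨f₀, hfA, hfc, hf0⟩ : ∃ f : MvPolynomial (Fin n) ℂ, f ∈ Aspace n k ∧
      (∀ J : Finset (Fin n), J.card = k - 1 → ∑ j ∈ Jᶜ, coeffI f (insert j J) = 0) ∧
      f ≠ 0 := by
    rcases Nat.eq_zero_or_pos k with rfl | hk0
    · exact ⟨1, (one_satisfies n).1, (one_satisfies n).2, one_ne_zero⟩
    · exact A0_nonzero n k hk (by omega) hk0
  set F₀ : A0space n k := ⟨f₀, hfA, hfc⟩ with hF₀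
  have hF₀ne : F₀ ≠ 0 := fun h => hf0 (congrArg Subtype.val h)
  -- the image element and its membership data
  obtain ⟨hgA, hgc⟩ : ((e F₀ : MvPolynomial (Fin n) ℂ) ∈ Aspace n l ∧
      ∀ J : Finset (Fin n), J.card = l - 1 →
        ∑ j ∈ Jᶜ, coeffI (e F₀ : MvPolynomial (Fin n) ℂ) (insert j J) = 0) := (e F₀).2
  -- the swapped elements
  set gp : Fin n × Fin n → A0space n k := fun p =>
    ⟨rename (Equiv.swap p.1 p.2) f₀,
      Aspace_rename hfA (Equiv.swap p.1 p.2), cond_rename hfc (Equiv.swap p.1 p.2)⟩ with hgp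
  have hequiv : ∀ p : Fin n × Fin n,
      (e (gp p) : MvPolynomial (Fin n) ℂ)
        = rename (Equiv.swap p.1 p.2) (e F₀ : MvPolynomial (Fin n) ℂ) :=
    fun p => he (Equiv.swap p.1 p.2) F₀ (gp p) rfl
  -- sum over all (ordered) pairs of distinct indices
  have hsum_k : (∑ p ∈ (Finset.univ : Finset (Fin n)).offDiag, gp p)
      = (((k*k + (n-k)*(n-k) : ℕ) : ℂ) - n - 2*k) • F₀ := by
    apply Subtype.ext
    rw [Submodule.coe_sum, SetLike.val_smul]
    simp only [hgp]
    exact classsum_mem hfA hfc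
  have hsum_l : ∑ p ∈ (Finset.univ : Finset (Fin n)).offDiag,
        (e (gp p) : MvPolynomial (Fin n) ℂ)
      = (((l*l + (n-l)*(n-l) : ℕ) : ℂ) - n - 2*l) • (e F₀ : MvPolynomial (Fin n) ℂ) := by
    rw [Finset.sum_congr rfl fun p _ => hequiv p]
    exact classsum_mem hgA hgc
  have hsum_l' : ∑ p ∈ (Finset.univ : Finset (Fin n)).offDiag,
        (e (gp p) : MvPolynomial (Fin n) ℂ)
      = (((k*k + (n-k)*(n-k) : ℕ) : ℂ) - n - 2*k) • (e F₀ : MvPolynomial (Fin n) ℂ) := by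
    have : ∑ p ∈ (Finset.univ : Finset (Fin n)).offDiag, e (gp p)
        = (((k*k + (n-k)*(n-k) : ℕ) : ℂ) - n - 2*k) • e F₀ := by
      rw [← map_sum, hsum_k, map_smul]
    calc ∑ p ∈ (Finset.univ : Finset (Fin n)).offDiag, (e (gp p) : MvPolynomial (Fin n) ℂ)
        = ((∑ p ∈ (Finset.univ : Finset (Fin n)).offDiag, e (gp p) :
            A0space n l) : MvPolynomial (Fin n) ℂ) := (Submodule.coe_sum _ _ _).symm
      _ = _ := by rw [this, SetLike.val_smul]
  have hkey : ((((k*k + (n-k)*(n-k) : ℕ) : ℂ) - n - 2*k)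
      - (((l*l + (n-l)*(n-l) : ℕ) : ℂ) - n - 2*l)) • (e F₀ : MvPolynomial (Fin n) ℂ) = 0 := by
    rw [sub_smul, ← hsum_l, ← hsum_l']
    exact sub_self _
  have hv : (e F₀ : MvPolynomial (Fin n) ℂ) ≠ 0 := by
    intro h
    exact hF₀ne (e.injective (by
      apply Subtype.ext
      simpa using h))
  rcases smul_eq_zero.mp hkey with h | h
  · exact scalar_ne hk hl hkl (by linear_combination h)
  · exact hv h

/-- For `0 ≤ 2k ≤ n`, `0 ≤ 2l ≤ n`, `k ≠ l`, the representations of `S_n` on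
`A⁰_{n,k}` and `A⁰_{n,l}` are inequivalent: there is no `S_n`-equivariant
`ℂ`-linear isomorphism between them. -/
theorem A0_inequivalent (n k l : ℕ) (hk : 2 * k ≤ n) (hl : 2 * l ≤ n) (hkl : k ≠ l) :
    ¬ ∃ e : A0space n k ≃ₗ[ℂ] A0space n l,
      ∀ (σ : Equiv.Perm (Fin n)) (f g : A0space n k),
        (g : MvPolynomial (Fin n) ℂ) = rename σ (f : MvPolynomial (Fin n) ℂ) →
        (e g : MvPolynomial (Fin n) ℂ) = rename σ (e f : MvPolynomial (Fin n) ℂ) := by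
  exact A0_inequivalent' n k l hk hl hkl

end
end
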